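/- arXiv:1807.01184 — 6 statements merged into one kernel-verified Lean document; each statement's English description precedes it below -/
import Mathlib

section
/- Let $0<p<u<\infty$. Then there is a constant $C>0$ such that for every complex sequence $\lambda=\{\lambda_k\}_{k\in\mathbb{Z}^d}$ in the weak Lorentz space $\ell_{u,\infty}(\mathbb{Z}^d)$ one has $\|\lambda\,|\,m_{u,p}\| \le C\,\|\lambda\,|\,\ell_{u,\infty}\|$; in particular $\ell_{u,\infty}(\mathbb{Z}^d)\hookrightarrow m_{u,p}(\mathbb{Z}^d)$ continuously. -/
open scoped ENNReal NNReal BigOperators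
open Filter

/-- The unit cube `Q_{0,k}` is contained in the dyadic cube `Q_{-j,m}` of side length `2^j`. -/
def inDyadic (d j : ℕ) (m k : Fin d → ℤ) : Prop :=
  ∀ i, 2 ^ j * m i ≤ k i ∧ k i < 2 ^ j * (m i + 1)

/-- The Morrey sequence space quasi-norm `‖λ | m_{u,p}(ℤ^d)‖`, with values in `ℝ≥0∞`. -/
noncomputable def morreyNorm (d : ℕ) (u p : ℝ) (lam : (Fin d → ℤ) → ℂ) : ℝ≥0∞ :=
  ⨆ (j : ℕ) (m : Fin d → ℤ),
    ((2 : ℝ≥0∞) ^ (j * d)) ^ (1 / u - 1 / p) *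
      (∑' k : {k : Fin d → ℤ // inDyadic d j m k}, (‖lam k.1‖₊ : ℝ≥0∞) ^ p) ^ (1 / p)

/-- The `ℓ_r(ℤ^d)` norm. -/
noncomputable def lpNorm (d : ℕ) (r : ℝ) (lam : (Fin d → ℤ) → ℂ) : ℝ≥0∞ :=
  (∑' k : Fin d → ℤ, (‖lam k‖₊ : ℝ≥0∞) ^ r) ^ (1 / r)

/-- The `ℓ_∞(ℤ^d)` norm. -/
noncomputable def lInftyNorm (d : ℕ) (lam : (Fin d → ℤ) → ℂ) : ℝ≥0∞ :=
  ⨆ k : Fin d → ℤ, (‖lam k‖₊ : ℝ≥0∞)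

/-- The weak Lorentz `ℓ_{u,∞}(ℤ^d)` norm, via the distribution function. -/
noncomputable def weakNorm (d : ℕ) (u : ℝ) (lam : (Fin d → ℤ) → ℂ) : ℝ≥0∞ :=
  ⨆ t : ℝ≥0, (t : ℝ≥0∞) *
    (∑' _ : {k : Fin d → ℤ // (t : ℝ) < ‖lam k‖}, (1 : ℝ≥0∞)) ^ (1 / u)

/-- The norm of the level-`j` space `X^{(j)}_{u,p}(ℤ^d)`. -/
noncomputable def XjNorm (d : ℕ) (u p p' : ℝ) (j : ℕ) (lam : (Fin d → ℤ) → ℂ) : ℝ≥0∞ :=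
  ((2 : ℝ≥0∞) ^ (j * d)) ^ (1 / p - 1 / u) *
    ∑' m : Fin d → ℤ,
      (∑' k : {k : Fin d → ℤ // inDyadic d j m k}, (‖lam k.1‖₊ : ℝ≥0∞) ^ p') ^ (1 / p')

/-- The norm of `X_{u,p}(ℤ^d)`: infimum over decompositions `λ = ∑_j λ^{(j)}`. -/
noncomputable def XupNorm (d : ℕ) (u p p' : ℝ) (lam : (Fin d → ℤ) → ℂ) : ℝ≥0∞ :=
  ⨅ (L : ℕ → (Fin d → ℤ) → ℂ) (_ : ∀ k, HasSum (fun j => L j k) (lam k)),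
    ∑' j : ℕ, XjNorm d u p p' j (L j)

/-- Membership in `m_{u,p}(ℤ^d)`. -/
def MemMorrey (d : ℕ) (u p : ℝ) (lam : (Fin d → ℤ) → ℂ) : Prop :=
  morreyNorm d u p lam ≠ ⊤

/-- Membership in `m^{00}_{u,p}(ℤ^d)`, the closure of the finitely supported sequences. -/
def MemMorrey00 (d : ℕ) (u p : ℝ) (lam : (Fin d → ℤ) → ℂ) : Prop :=
  MemMorrey d u p lam ∧
    ∀ ε : ℝ≥0∞, 0 < ε → ∃ mu : (Fin d → ℤ) → ℂ,
      (Function.support mu).Finite ∧ morreyNorm d u p (lam - mu) < ε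

/-- `Q_{-ν,m} ⊆ Q_{-j,0}` for dyadic cubes. -/
def subCube (d j ν : ℕ) (m : Fin d → ℤ) : Prop :=
  ν ≤ j ∧ ∀ i, 0 ≤ m i ∧ 2 ^ ν * (m i + 1) ≤ 2 ^ j

/-- Norm of the finite-dimensional Morrey space `m^{2^{jd}}_{u,p}` on the cube `Q_{-j,0}`. -/
noncomputable def finMorreyNorm (d : ℕ) (u p : ℝ) (j : ℕ) (lam : (Fin d → ℤ) → ℂ) : ℝ≥0∞ :=
  ⨆ (ν : ℕ) (m : Fin d → ℤ) (_ : subCube d j ν m),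
    ((2 : ℝ≥0∞) ^ (ν * d)) ^ (1 / u - 1 / p) *
      (∑' k : {k : Fin d → ℤ // inDyadic d ν m k}, (‖lam k.1‖₊ : ℝ≥0∞) ^ p) ^ (1 / p)

/-- Operator norm of `id_j : m^{2^{jd}}_{u₁,p₁} → m^{2^{jd}}_{u₂,p₂}`. -/
noncomputable def morreyOpNorm (d : ℕ) (u₁ p₁ u₂ p₂ : ℝ) (j : ℕ) : ℝ≥0∞ :=
  ⨆ (lam : (Fin d → ℤ) → ℂ) (_ : finMorreyNorm d u₁ p₁ j lam ≤ 1),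
    finMorreyNorm d u₂ p₂ j lam


/-!
On a dyadic cube `Q` with `N = 2^{jd}` lattice points, split the values `|λ_k|` at the level
`T = W N^{-1/u}`, where `W` is the weak `ℓ_{u,∞}` norm. Values below `T` contribute at most
`N T^p`. Values in `(2^n T, 2^{n+1} T]` number at most `(W / 2^n T)^u`, so they contribute
`≲ W^u T^{p-u} 2^{n(p-u)}`, which is summable over `n` because `p < u`. With this choice of `T`
both parts are `≲ W^p N^{1-p/u}`, which is exactly the Morrey normalisation `|Q|^{1/u-1/p}`.
-/

/-- `1` accounts for the values below the threshold, `2^p ∑ₙ 2^{n(p-u)}` for the dyadic layers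
above it. -/
noncomputable def dyadicLayerConst (p u : ℝ) : ℝ≥0∞ :=
  1 + 2 ^ p * (1 - 2 ^ (p - u))⁻¹

lemma dyadicLayerConst_rpow_ne_zero (p u : ℝ) {y : ℝ} (hy : 0 ≤ y) :
    dyadicLayerConst p u ^ y ≠ 0 := by
  simp [ENNReal.rpow_eq_zero_iff, dyadicLayerConst, hy]

lemma dyadicLayerConst_ne_top {p u : ℝ} (hpu : p < u) : dyadicLayerConst p u ≠ ⊤ := by
  have hr : (2 : ℝ≥0∞) ^ (p - u) < 1 :=
    ENNReal.rpow_lt_one_of_one_lt_of_neg (by norm_num) (by linarith)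
  have h2p : (2 : ℝ≥0∞) ^ p ≠ ⊤ := by simp [ENNReal.rpow_eq_top_iff]
  simp only [dyadicLayerConst, ne_eq, ENNReal.add_eq_top, ENNReal.one_ne_top, false_or]
  exact ENNReal.mul_ne_top h2p (ENNReal.inv_ne_top.mpr (tsub_pos_of_lt hr).ne')

section DyadicLayers

variable {ι : Type*} {p u : ℝ}

lemma rpow_le_add_tsum_dyadic_layers (hp : 0 < p) (a : ℝ≥0) {T : ℝ≥0} (hT : T ≠ 0) :
    (a : ℝ≥0∞) ^ p ≤ (T : ℝ≥0∞) ^ p +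
      2 ^ p * ∑' n : ℕ, if 2 ^ n * T < a then ((2 ^ n * T : ℝ≥0) : ℝ≥0∞) ^ p else 0 := by
  set S := ∑' n : ℕ, if 2 ^ n * T < a then ((2 ^ n * T : ℝ≥0) : ℝ≥0∞) ^ p else 0
  have below : ∀ n : ℕ, a ≤ 2 ^ n * T → (a : ℝ≥0∞) ^ p ≤ (T : ℝ≥0∞) ^ p + 2 ^ p * S := by
    intro n
    induction n with
    | zero =>
      intro ha
      exact le_add_right (ENNReal.rpow_le_rpow (by simpa using ha) hp.le)
    | succ n ih =>
      intro ha
      by_cases hn : a ≤ 2 ^ n * T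
      · exact ih hn
      · have layer : ((2 ^ n * T : ℝ≥0) : ℝ≥0∞) ^ p ≤ S := by
          refine le_trans ?_ (ENNReal.le_tsum n)
          rw [if_pos (not_le.mp hn)]
        have ha' : a ≤ 2 * (2 ^ n * T) := by rwa [← mul_assoc, ← pow_succ']
        calc (a : ℝ≥0∞) ^ p ≤ ((2 * (2 ^ n * T) : ℝ≥0) : ℝ≥0∞) ^ p :=
              ENNReal.rpow_le_rpow (by exact_mod_cast ha') hp.le
          _ = 2 ^ p * ((2 ^ n * T : ℝ≥0) : ℝ≥0∞) ^ p := by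
              rw [ENNReal.coe_mul, ENNReal.mul_rpow_of_nonneg _ _ hp.le]
              rfl
          _ ≤ (T : ℝ≥0∞) ^ p + 2 ^ p * S := le_add_left (by gcongr)
  obtain ⟨n, hn⟩ := pow_unbounded_of_one_lt (a / T) one_lt_two
  exact below n ((div_lt_iff₀ (pos_iff_ne_zero.mpr hT)).mp hn).le

lemma tsum_ite_lt_eq_mul_tsum_one (f : ι → ℝ≥0) (t : ℝ≥0) (c : ℝ≥0∞) :
    ∑' i, (if t < f i then c else 0) = c * ∑' _ : {i // t < f i}, (1 : ℝ≥0∞) := by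
  rw [← ENNReal.tsum_mul_left, mul_one]
  exact (tsum_subtype {i | t < f i} fun _ => c).symm

lemma rpow_mul_div_rpow {t : ℝ≥0} (ht : t ≠ 0) (hu : 0 ≤ u) (W : ℝ≥0∞) :
    (t : ℝ≥0∞) ^ p * (W / t) ^ u = W ^ u * (t : ℝ≥0∞) ^ (p - u) := by
  have ht' : (t : ℝ≥0∞) ≠ 0 := by exact_mod_cast ht
  rw [ENNReal.div_rpow_of_nonneg _ _ hu, div_eq_mul_inv, ← ENNReal.rpow_neg, mul_left_comm,
    ← ENNReal.rpow_add _ _ ht' ENNReal.coe_ne_top, ← sub_eq_add_neg]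

lemma tsum_dyadic_layer_le (hu : 0 ≤ u) (f : ι → ℝ≥0) {W : ℝ≥0∞}
    (hdist : ∀ t : ℝ≥0, t ≠ 0 → ∑' _ : {i // t < f i}, (1 : ℝ≥0∞) ≤ (W / t) ^ u)
    {T : ℝ≥0} (hT : T ≠ 0) (n : ℕ) :
    ∑' i, (if 2 ^ n * T < f i then ((2 ^ n * T : ℝ≥0) : ℝ≥0∞) ^ p else 0) ≤
      W ^ u * (T : ℝ≥0∞) ^ (p - u) * (2 ^ (p - u)) ^ n := by
  have hlevel : 2 ^ n * T ≠ 0 := by positivity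
  rw [tsum_ite_lt_eq_mul_tsum_one]
  calc ((2 ^ n * T : ℝ≥0) : ℝ≥0∞) ^ p * ∑' _ : {i // 2 ^ n * T < f i}, (1 : ℝ≥0∞)
      ≤ ((2 ^ n * T : ℝ≥0) : ℝ≥0∞) ^ p * (W / ((2 ^ n * T : ℝ≥0) : ℝ≥0∞)) ^ u := by
        gcongr
        exact hdist _ hlevel
    _ = W ^ u * (T : ℝ≥0∞) ^ (p - u) * (2 ^ (p - u)) ^ n := by
        rw [rpow_mul_div_rpow hlevel hu, ENNReal.coe_mul,
          ENNReal.mul_rpow_of_ne_top (by simp) ENNReal.coe_ne_top, ENNReal.coe_pow,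
          ← ENNReal.rpow_natCast_mul, mul_comm (n : ℝ), ENNReal.rpow_mul_natCast, ENNReal.coe_ofNat]
        ring

lemma tsum_rpow_le_of_distribution (hp : 0 < p) (hu : 0 ≤ u) (f : ι → ℝ≥0) {N W : ℝ≥0∞}
    (hcard : ∑' _ : ι, (1 : ℝ≥0∞) ≤ N)
    (hdist : ∀ t : ℝ≥0, t ≠ 0 → ∑' _ : {i // t < f i}, (1 : ℝ≥0∞) ≤ (W / t) ^ u)
    {T : ℝ≥0} (hT : T ≠ 0) :
    ∑' i, (f i : ℝ≥0∞) ^ p ≤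
      N * (T : ℝ≥0∞) ^ p + 2 ^ p * (1 - 2 ^ (p - u))⁻¹ * (W ^ u * (T : ℝ≥0∞) ^ (p - u)) := by
  calc ∑' i, (f i : ℝ≥0∞) ^ p
      ≤ ∑' i, ((T : ℝ≥0∞) ^ p + 2 ^ p * ∑' n : ℕ,
          if 2 ^ n * T < f i then ((2 ^ n * T : ℝ≥0) : ℝ≥0∞) ^ p else 0) :=
        ENNReal.tsum_le_tsum fun i => rpow_le_add_tsum_dyadic_layers hp (f i) hT
    _ = (∑' _ : ι, (1 : ℝ≥0∞)) * (T : ℝ≥0∞) ^ p + 2 ^ p * ∑' n : ℕ, ∑' i,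
          (if 2 ^ n * T < f i then ((2 ^ n * T : ℝ≥0) : ℝ≥0∞) ^ p else 0) := by
        rw [ENNReal.tsum_add, ENNReal.tsum_mul_left, ENNReal.tsum_comm, ← ENNReal.tsum_mul_right,
          one_mul]
    _ ≤ N * (T : ℝ≥0∞) ^ p +
          2 ^ p * ∑' n : ℕ, W ^ u * (T : ℝ≥0∞) ^ (p - u) * (2 ^ (p - u)) ^ n := by
        gcongr with n
        exact tsum_dyadic_layer_le hu f hdist hT n
    _ = N * (T : ℝ≥0∞) ^ p + 2 ^ p * (1 - 2 ^ (p - u))⁻¹ * (W ^ u * (T : ℝ≥0∞) ^ (p - u)) := by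
        rw [ENNReal.tsum_mul_left, ENNReal.tsum_geometric]
        ring

lemma tsum_rpow_le_dyadicLayerConst_mul (hp : 0 < p) (hu : 0 < u) (f : ι → ℝ≥0) {N W : ℝ≥0}
    (hN : N ≠ 0) (hcard : ∑' _ : ι, (1 : ℝ≥0∞) ≤ N)
    (hdist : ∀ t : ℝ≥0, t ≠ 0 → ∑' _ : {i // t < f i}, (1 : ℝ≥0∞) ≤ (W / t) ^ u) :
    ∑' i, (f i : ℝ≥0∞) ^ p ≤ dyadicLayerConst p u * ((W ^ p * N ^ (1 - p / u) : ℝ≥0) : ℝ≥0∞) := by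
  rcases eq_or_ne W 0 with rfl | hW
  · have hf : ∀ i, f i = 0 := by
      intro i
      by_contra hi
      have hlevel : (1 : ℝ≥0∞) ≤ ∑' _ : {j // f i / 2 < f j}, 1 :=
        ENNReal.le_tsum ⟨i, NNReal.half_lt_self hi⟩
      have hempty := hdist (f i / 2) (by simpa using hi)
      simp [ENNReal.zero_rpow_of_pos hu] at hempty
      simp [hempty] at hlevel
    simp [hf, ENNReal.zero_rpow_of_pos hp]
  set T : ℝ≥0 := W * N ^ (-(1 / u))
  have hT : T ≠ 0 := mul_ne_zero hW (NNReal.rpow_pos (pos_iff_ne_zero.mpr hN)).ne'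
  have below_T : N * T ^ p = W ^ p * N ^ (1 - p / u) := by
    rw [NNReal.mul_rpow, ← NNReal.rpow_mul, show 1 - p / u = 1 + -(1 / u) * p by ring,
      NNReal.rpow_add hN, NNReal.rpow_one]
    ring
  have above_T : W ^ u * T ^ (p - u) = W ^ p * N ^ (1 - p / u) := by
    rw [NNReal.mul_rpow, ← NNReal.rpow_mul, ← mul_assoc, ← NNReal.rpow_add hW,
      show u + (p - u) = p by ring, show -(1 / u) * (p - u) = 1 - p / u by field_simp; ring]
  calc ∑' i, (f i : ℝ≥0∞) ^ p
      ≤ N * (T : ℝ≥0∞) ^ p + 2 ^ p * (1 - 2 ^ (p - u))⁻¹ * (W ^ u * (T : ℝ≥0∞) ^ (p - u)) :=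
        tsum_rpow_le_of_distribution hp hu.le f hcard hdist hT
    _ = dyadicLayerConst p u * ((W ^ p * N ^ (1 - p / u) : ℝ≥0) : ℝ≥0∞) := by
        rw [← ENNReal.coe_rpow_of_ne_zero hT, ← ENNReal.coe_rpow_of_ne_zero hT,
          ← ENNReal.coe_rpow_of_ne_zero hW,
          ← ENNReal.coe_mul, ← ENNReal.coe_mul, below_T, above_T, dyadicLayerConst]
        ring

end DyadicLayers

lemma tsum_one_inDyadic_le (d j : ℕ) (m : Fin d → ℤ) :
    ∑' _ : {k : Fin d → ℤ // inDyadic d j m k}, (1 : ℝ≥0∞) ≤ ((2 ^ (j * d) : ℝ≥0) : ℝ≥0∞) := by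
  let offset (k : {k : Fin d → ℤ // inDyadic d j m k}) (i : Fin d) : Fin (2 ^ j) :=
    ⟨(k.1 i - 2 ^ j * m i).toNat, by
      have hk := k.2 i
      rw [Int.toNat_lt' (by positivity)]
      push_cast
      linarith [hk.2]⟩
  have hoffset : Function.Injective offset := by
    intro k k' hkk'
    refine Subtype.ext (funext fun i => ?_)
    have h := congrArg Fin.val (congrFun hkk' i)
    have hk := (k.2 i).1
    have hk' := (k'.2 i).1
    simp only [offset] at h
    omega
  calc ∑' _ : {k : Fin d → ℤ // inDyadic d j m k}, (1 : ℝ≥0∞)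
      ≤ ∑' _ : Fin d → Fin (2 ^ j), (1 : ℝ≥0∞) :=
        ENNReal.tsum_comp_le_tsum_of_injective hoffset fun _ => 1
    _ = ((2 ^ (j * d) : ℝ≥0) : ℝ≥0∞) := by
        simp [tsum_fintype, ← pow_mul]

lemma tsum_one_lt_norm_le_weakNorm {d : ℕ} {u : ℝ} (hu : 0 < u) (lam : (Fin d → ℤ) → ℂ)
    {t : ℝ≥0} (ht : t ≠ 0) :
    ∑' _ : {k : Fin d → ℤ // (t : ℝ) < ‖lam k‖}, (1 : ℝ≥0∞) ≤ (weakNorm d u lam / t) ^ u := by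
  have hlevel := le_iSup (fun t : ℝ≥0 => (t : ℝ≥0∞) *
    (∑' _ : {k : Fin d → ℤ // (t : ℝ) < ‖lam k‖}, (1 : ℝ≥0∞)) ^ (1 / u)) t
  rw [← ENNReal.rpow_inv_le_iff hu, ← one_div,
    ENNReal.le_div_iff_mul_le (Or.inl (by simpa using ht)) (by simp), mul_comm]
  exact hlevel

lemma morreyNorm_le_mul_weakNorm {d : ℕ} {u p : ℝ} (hp : 0 < p) (hu : 0 < u)
    (lam : (Fin d → ℤ) → ℂ) :
    morreyNorm d u p lam ≤ dyadicLayerConst p u ^ (1 / p) * weakNorm d u lam := by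
  have hK := dyadicLayerConst_rpow_ne_zero p u (one_div_nonneg.mpr hp.le)
  rcases eq_or_ne (weakNorm d u lam) ⊤ with hW | hW
  · rw [hW, ENNReal.mul_top hK]
    exact le_top
  obtain ⟨W, hW⟩ : ∃ W : ℝ≥0, weakNorm d u lam = W := ⟨_, (ENNReal.coe_toNNReal hW).symm⟩
  refine iSup₂_le fun j m => ?_
  set N : ℝ≥0 := 2 ^ (j * d)
  have hN : N ≠ 0 := by positivity
  have hdist (t : ℝ≥0) (ht : t ≠ 0) :
      ∑' _ : {k : {k : Fin d → ℤ // inDyadic d j m k} // t < ‖lam k.1‖₊}, (1 : ℝ≥0∞) ≤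
        (W / t) ^ u := by
    refine le_trans ?_ (hW ▸ tsum_one_lt_norm_le_weakNorm hu lam ht)
    exact ENNReal.tsum_comp_le_tsum_of_injective
      (f := fun k => (⟨k.1.1, k.2⟩ : {k : Fin d → ℤ // (t : ℝ) < ‖lam k‖}))
      (fun k k' h => by simpa [Subtype.ext_iff] using h) fun _ => 1
  have hcube := tsum_rpow_le_dyadicLayerConst_mul hp hu
    (fun k : {k : Fin d → ℤ // inDyadic d j m k} => ‖lam k.1‖₊) hN (tsum_one_inDyadic_le d j m)
    hdist
  have hscale : N ^ (1 / u - 1 / p) * (W ^ p * N ^ (1 - p / u)) ^ (1 / p) = W := by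
    rw [NNReal.mul_rpow, ← NNReal.rpow_mul, ← NNReal.rpow_mul, mul_one_div_cancel hp.ne',
      NNReal.rpow_one, mul_left_comm, ← NNReal.rpow_add hN,
      show 1 / u - 1 / p + (1 - p / u) * (1 / p) = 0 by field_simp; ring, NNReal.rpow_zero,
      mul_one]
  calc ((2 : ℝ≥0∞) ^ (j * d)) ^ (1 / u - 1 / p) *
        (∑' k : {k : Fin d → ℤ // inDyadic d j m k}, (‖lam k.1‖₊ : ℝ≥0∞) ^ p) ^ (1 / p)
      ≤ (N : ℝ≥0∞) ^ (1 / u - 1 / p) *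
        (dyadicLayerConst p u * ((W ^ p * N ^ (1 - p / u) : ℝ≥0) : ℝ≥0∞)) ^ (1 / p) := by
        simp only [N, ENNReal.coe_pow, ENNReal.coe_ofNat]
        gcongr
    _ = dyadicLayerConst p u ^ (1 / p) * weakNorm d u lam := by
        rw [ENNReal.mul_rpow_of_nonneg _ _ (by positivity), mul_left_comm,
          ← ENNReal.coe_rpow_of_ne_zero hN, ← ENNReal.coe_rpow_of_nonneg _ (by positivity),
          ← ENNReal.coe_mul, hscale, hW]

theorem weak_lorentz_embeds_morrey (d : ℕ) (u p : ℝ) (hp : 0 < p) (hpu : p < u) :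
    ∃ C : ℝ≥0, 0 < C ∧
      (∀ lam : (Fin d → ℤ) → ℂ, morreyNorm d u p lam ≤ (C : ℝ≥0∞) * weakNorm d u lam) ∧
      {lam : (Fin d → ℤ) → ℂ | weakNorm d u lam ≠ ⊤} ⊆
        {lam : (Fin d → ℤ) → ℂ | morreyNorm d u p lam ≠ ⊤} := by
  have hK : dyadicLayerConst p u ^ (1 / p) ≠ ⊤ :=
    ENNReal.rpow_ne_top_of_nonneg (by positivity) (dyadicLayerConst_ne_top hpu)
  have hK0 := dyadicLayerConst_rpow_ne_zero p u (one_div_nonneg.mpr hp.le)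
  have hbound (lam : (Fin d → ℤ) → ℂ) :
      morreyNorm d u p lam ≤ dyadicLayerConst p u ^ (1 / p) * weakNorm d u lam :=
    morreyNorm_le_mul_weakNorm hp (hp.trans hpu) lam
  refine ⟨(dyadicLayerConst p u ^ (1 / p)).toNNReal, ENNReal.toNNReal_pos hK0 hK, ?_, ?_⟩
  · simpa only [ENNReal.coe_toNNReal hK] using hbound
  · exact fun lam hlam => ne_top_of_le_ne_top (ENNReal.mul_ne_top hK hlam) (hbound lam)
end

section
/- Let $0<p<u<\infty$. Then the space $m_{u,p}(\mathbb{Z}^d)$ and the spaces $c_0(\mathbb{Z}^d)$ and $c(\mathbb{Z}^d)$ are incomparable: there exists $\lambda\in c_0(\mathbb{Z}^d)$ (hence also in $c(\mathbb{Z}^d)$) with $\lambda\notin m_{u,p}(\mathbb{Z}^d)$, and there exists $\mu\in m_{u,p}(\mathbb{Z}^d)$ with $\mu\notin c(\mathbb{Z}^d)$ (hence also $\mu\notin c_0(\mathbb{Z}^d)$). Thus $m_{u,p}\not\subset c_0$, $m_{u,p}\not\subset c$, $c_0\not\subset m_{u,p}$ and $c\not\subset m_{u,p}$. -/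
open scoped ENNReal NNReal BigOperators
open Filter

/-! A sequence that is at least `c` on a cube of side `2^j` has Morrey norm at least
`2^{jd/u} c`; hence `(1 + ‖k‖)^{-d/(2u)}` tends to zero but has norm at least `2^{jd/(2u)}`,
as seen on the cubes `[0, 2^j)^d`.

The indicator of the points `2^n e_i` takes both values `0` and `1` infinitely often, so it has
no limit. Of two powers of two in an interval of length `2^j` the larger is at most `2^j`, so a
cube of side `2^j` contains at most `j + 2` of these points, and the Morrey norm is bounded by
`sup_j 2^{-jd(1/p - 1/u)} (j + 2)^{1/p}`, which is finite because `p < u`. -/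

open Topology

def cubeEmbedding (d j : ℕ) (m : Fin d → ℤ) :
    (Fin d → Fin (2 ^ j)) ↪ {k : Fin d → ℤ // inDyadic d j m k} where
  toFun v := ⟨fun i => 2 ^ j * m i + (v i : ℕ), fun i => by
    have hv : ((v i : ℕ) : ℤ) < 2 ^ j := by exact_mod_cast (v i).isLt
    exact ⟨le_add_of_nonneg_right (by positivity), by linarith [mul_add_one ((2 : ℤ) ^ j) (m i)]⟩⟩
  inj' v w h := funext fun i => Fin.ext <| by
    simpa using congrFun (congrArg Subtype.val h) i

lemma le_tsum_cube {d j : ℕ} {m : Fin d → ℤ} {f : {k : Fin d → ℤ // inDyadic d j m k} → ℝ≥0∞}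
    {c : ℝ≥0∞} (hf : ∀ k, c ≤ f k) : (2 : ℝ≥0∞) ^ (j * d) * c ≤ ∑' k, f k :=
  calc (2 : ℝ≥0∞) ^ (j * d) * c = ∑' _ : Fin d → Fin (2 ^ j), c := by
        simp [pow_mul]
    _ ≤ ∑' v, f (cubeEmbedding d j m v) := ENNReal.tsum_le_tsum fun _ => hf _
    _ ≤ ∑' k, f k := ENNReal.tsum_comp_le_tsum_of_injective (cubeEmbedding d j m).injective f

lemma le_morreyNorm_of_le_on_cube {d j : ℕ} {m : Fin d → ℤ} {u p : ℝ} (hp : 0 < p)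
    {lam : (Fin d → ℤ) → ℂ} {c : ℝ≥0∞} (hc : ∀ k, inDyadic d j m k → c ≤ ‖lam k‖₊) :
    ((2 : ℝ≥0∞) ^ (j * d)) ^ (1 / u) * c ≤ morreyNorm d u p lam := by
  set N : ℝ≥0∞ := 2 ^ (j * d)
  have hN₀ : N ≠ 0 := pow_ne_zero _ two_ne_zero
  have hN : N ≠ ⊤ := ENNReal.pow_ne_top ENNReal.ofNat_ne_top
  calc N ^ (1 / u) * c = N ^ (1 / u - 1 / p) * (N * c ^ p) ^ (1 / p) := by
        rw [ENNReal.mul_rpow_of_nonneg _ _ (by positivity), ← ENNReal.rpow_mul,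
          mul_one_div_cancel hp.ne', ENNReal.rpow_one, ← mul_assoc,
          ← ENNReal.rpow_add _ _ hN₀ hN, sub_add_cancel]
    _ ≤ N ^ (1 / u - 1 / p) *
          (∑' k : {k : Fin d → ℤ // inDyadic d j m k}, (‖lam k.1‖₊ : ℝ≥0∞) ^ p) ^ (1 / p) := by
        gcongr
        exact le_tsum_cube fun k => ENNReal.rpow_le_rpow (hc k.1 k.2) hp.le
    _ ≤ morreyNorm d u p lam := le_iSup₂_of_le (f := fun j m => _) j m le_rfl

lemma morreyNorm_le_iSup_of_tsum_le {d : ℕ} {u p : ℝ} (hp : 0 ≤ p) {lam : (Fin d → ℤ) → ℂ}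
    {b : ℕ → ℝ≥0∞}
    (hb : ∀ j m, ∑' k : {k : Fin d → ℤ // inDyadic d j m k}, (‖lam k.1‖₊ : ℝ≥0∞) ^ p ≤ b j) :
    morreyNorm d u p lam ≤ ⨆ j : ℕ, ((2 : ℝ≥0∞) ^ (j * d)) ^ (1 / u - 1 / p) * b j ^ (1 / p) :=
  iSup₂_le fun j m => le_iSup_of_le j <| by gcongr; exact hb j m

noncomputable def polyDecay (d : ℕ) (δ : ℝ) (k : Fin d → ℤ) : ℂ :=
  ((1 + ‖k‖) ^ (-δ) : ℝ)

lemma tendsto_polyDecay {d : ℕ} {δ : ℝ} (hδ : 0 < δ) :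
    Tendsto (polyDecay d δ) cofinite (𝓝 0) := by
  have hnorm : Tendsto (fun k : Fin d → ℤ => ‖k‖) cofinite atTop := by
    rw [← cocompact_eq_cofinite]
    exact tendsto_norm_cocompact_atTop
  have h := (Complex.continuous_ofReal.tendsto 0).comp
    ((tendsto_rpow_neg_atTop hδ).comp (tendsto_atTop_add_const_left _ 1 hnorm))
  rwa [Complex.ofReal_zero] at h

lemma one_add_norm_le_of_inDyadic_zero {d j : ℕ} {k : Fin d → ℤ} (hk : inDyadic d j 0 k) :
    1 + ‖k‖ ≤ 2 ^ j := by
  have hle : ‖k‖ ≤ 2 ^ j - 1 := by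
    refine (pi_norm_le_iff_of_nonneg (by simpa using one_le_pow₀ one_le_two)).2 fun i => ?_
    obtain ⟨h₀, h₁⟩ := hk i
    simp only [Pi.zero_apply, mul_zero, zero_add, mul_one] at h₀ h₁
    rw [Int.norm_eq_abs, abs_of_nonneg (by exact_mod_cast h₀)]
    exact_mod_cast Int.le_sub_one_of_lt h₁
  linarith

lemma inv_pow_le_nnnorm_polyDecay {d j : ℕ} {δ : ℝ} (hδ : 0 ≤ δ) {k : Fin d → ℤ}
    (hk : inDyadic d j 0 k) : (((2 : ℝ≥0∞) ^ δ) ^ j)⁻¹ ≤ ‖polyDecay d δ k‖₊ := by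
  have hpos : 0 < 1 + ‖k‖ := by positivity
  calc (((2 : ℝ≥0∞) ^ δ) ^ j)⁻¹ = ENNReal.ofReal (((2 : ℝ) ^ j) ^ (-δ)) := by
        rw [← ENNReal.ofReal_rpow_of_pos (by positivity), ENNReal.ofReal_pow zero_le_two,
          ENNReal.ofReal_ofNat, ENNReal.rpow_neg]
        simp only [← ENNReal.rpow_natCast, ← ENNReal.rpow_mul, mul_comm]
    _ ≤ ENNReal.ofReal ((1 + ‖k‖) ^ (-δ)) := ENNReal.ofReal_le_ofReal <|
        Real.rpow_le_rpow_of_nonpos hpos (one_add_norm_le_of_inDyadic_zero hk) (by linarith)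
    _ = ‖polyDecay d δ k‖₊ := by
        rw [polyDecay, Complex.nnnorm_real, ← enorm_eq_nnnorm,
          Real.enorm_eq_ofReal (by positivity)]

lemma morreyNorm_polyDecay_eq_top {d : ℕ} (hd : 0 < d) {u p : ℝ} (hu : 0 < u) (hp : 0 < p) :
    morreyNorm d u p (polyDecay d (d / (2 * u))) = ⊤ := by
  set δ : ℝ := d / (2 * u) with hδ_def
  have hδ : 0 < δ := by positivity
  have hgrowth : ∀ j : ℕ, ((2 : ℝ≥0∞) ^ δ) ^ j ≤ morreyNorm d u p (polyDecay d δ) := by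
    intro j
    have hcube : ((2 : ℝ≥0∞) ^ (j * d)) ^ (1 / u) = (((2 : ℝ≥0∞) ^ δ) ^ j) ^ 2 := by
      simp only [← ENNReal.rpow_natCast, ← ENNReal.rpow_mul]
      congr 1
      push_cast
      rw [hδ_def]
      field_simp
    calc ((2 : ℝ≥0∞) ^ δ) ^ j
        = ((2 : ℝ≥0∞) ^ (j * d)) ^ (1 / u) * (((2 : ℝ≥0∞) ^ δ) ^ j)⁻¹ := by
          have hne : ((2 : ℝ≥0∞) ^ δ) ^ j ≠ 0 :=
            pow_ne_zero j (ENNReal.rpow_pos (by norm_num) (by norm_num)).ne'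
          rw [hcube, sq, mul_assoc, ENNReal.mul_inv_cancel hne (by simp), mul_one]
      _ ≤ _ := le_morreyNorm_of_le_on_cube hp fun k hk => inv_pow_le_nnnorm_polyDecay hδ.le hk
  have hlim : Tendsto (fun j : ℕ => ((2 : ℝ≥0∞) ^ δ) ^ j) atTop (𝓝 ⊤) :=
    ENNReal.tendsto_pow_atTop_nhds_top_iff.2 (ENNReal.one_lt_rpow (by norm_num) hδ)
  exact top_le_iff.1 (le_of_tendsto' hlim hgrowth)

lemma le_of_lt_of_two_pow_mem_Ico {a : ℤ} {j n n' : ℕ} (hn : (2 : ℤ) ^ n ∈ Set.Ico a (a + 2 ^ j))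
    (hn' : (2 : ℤ) ^ n' ∈ Set.Ico a (a + 2 ^ j)) (hlt : n < n') : n' ≤ j := by
  have hdouble : 2 * (2 : ℤ) ^ n ≤ 2 ^ n' := by
    rw [← pow_succ']
    exact pow_le_pow_right₀ one_le_two hlt
  have hgap : (2 : ℤ) ^ n' < 2 ^ (j + 1) := by
    rw [pow_succ]
    linarith [hn.1, hn'.2]
  exact Nat.lt_succ_iff.1 ((pow_lt_pow_iff_right₀ one_lt_two).1 hgap)

lemma encard_setOf_two_pow_mem_Ico_le (a : ℤ) (j : ℕ) :
    {n : ℕ | (2 : ℤ) ^ n ∈ Set.Ico a (a + 2 ^ j)}.encard ≤ j + 2 := by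
  have hinj :
      Set.InjOn (fun n => min n (j + 1)) {n : ℕ | (2 : ℤ) ^ n ∈ Set.Ico a (a + 2 ^ j)} := by
    intro n hn n' hn' h
    rcases lt_trichotomy n n' with hlt | heq | hgt
    · have := le_of_lt_of_two_pow_mem_Ico hn hn' hlt
      dsimp only at h
      omega
    · exact heq
    · have := le_of_lt_of_two_pow_mem_Ico hn' hn hgt
      dsimp only at h
      omega
  calc _ ≤ (Set.Iio (j + 2)).encard :=
        Set.encard_le_encard_of_injOn
          (fun n _ => Set.mem_Iio.2 (show min n (j + 1) < j + 2 by omega)) hinj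
    _ = j + 2 := by simp [Set.encard_eq_coe_toFinset_card]

def powAxis {d : ℕ} (i : Fin d) (n : ℕ) : Fin d → ℤ :=
  Pi.single i (2 ^ n)

lemma powAxis_injective {d : ℕ} (i : Fin d) : Function.Injective (powAxis i) :=
  (Pi.single_injective i).comp (pow_right_injective₀ two_pos (by norm_num))

lemma encard_cube_inter_range_powAxis_le {d : ℕ} (i : Fin d) (j : ℕ) (m : Fin d → ℤ) :
    ({k | inDyadic d j m k} ∩ Set.range (powAxis i)).encard ≤ j + 2 := by
  have hsub : {k | inDyadic d j m k} ∩ Set.range (powAxis i) ⊆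
      powAxis i '' {n : ℕ | (2 : ℤ) ^ n ∈ Set.Ico (2 ^ j * m i) (2 ^ j * m i + 2 ^ j)} := by
    rintro _ ⟨hk, n, rfl⟩
    have := hk i
    simp only [powAxis, Pi.single_eq_same] at this
    exact ⟨n, ⟨this.1, by linarith [this.2, mul_add_one ((2 : ℤ) ^ j) (m i)]⟩, rfl⟩
  exact (Set.encard_le_encard hsub).trans
    ((Set.encard_image_le _ _).trans (encard_setOf_two_pow_mem_Ico_le _ _))

lemma tsum_cube_indicator_one {d : ℕ} {p : ℝ} (hp : 0 < p) (S : Set (Fin d → ℤ)) (j : ℕ)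
    (m : Fin d → ℤ) :
    ∑' k : {k : Fin d → ℤ // inDyadic d j m k},
        (‖S.indicator (1 : (Fin d → ℤ) → ℂ) k.1‖₊ : ℝ≥0∞) ^ p =
      ({k | inDyadic d j m k} ∩ S).encard := by
  have hterm : ∀ k, (‖S.indicator (1 : (Fin d → ℤ) → ℂ) k‖₊ : ℝ≥0∞) ^ p = S.indicator 1 k := by
    intro k
    by_cases hk : k ∈ S <;> simp [hk, hp]
  simp_rw [hterm]
  calc ∑' k : {k : Fin d → ℤ // inDyadic d j m k}, S.indicator 1 k.1
      = ∑' k, {k | inDyadic d j m k}.indicator (S.indicator 1) k := tsum_subtype _ _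
    _ = ∑' _ : ↥({k | inDyadic d j m k} ∩ S), (1 : ℝ≥0∞) := by
        rw [Set.indicator_indicator, ← tsum_subtype]
        rfl
    _ = _ := ENNReal.tsum_set_one _

lemma add_two_le_mul_pow {r : ℝ} (hr : 1 < r) (n : ℕ) :
    (n : ℝ) + 2 ≤ (2 + (r - 1)⁻¹) * r ^ n := by
  have hbern : 1 + n * (r - 1) ≤ r ^ n := by
    simpa using one_add_mul_le_pow (a := r - 1) (by linarith) n
  have hr₁ : 0 < r - 1 := by linarith
  have h1 : 1 ≤ r ^ n := one_le_pow₀ hr.le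
  have h2 : (n : ℝ) ≤ (r - 1)⁻¹ * r ^ n := by
    rw [inv_mul_eq_div, le_div_iff₀ hr₁]
    linarith
  linarith

lemma iSup_two_pow_rpow_mul_add_two_rpow_ne_top {d : ℕ} (hd : 0 < d) {u p : ℝ} (hp : 0 < p)
    (hpu : p < u) :
    ⨆ j : ℕ, ((2 : ℝ≥0∞) ^ (j * d)) ^ (1 / u - 1 / p) * ((j : ℝ≥0∞) + 2) ^ (1 / p) ≠ ⊤ := by
  have hu : 0 < u := hp.trans hpu
  set s : ℝ := d * (1 - p / u) with hs_def
  have hs : 0 < s := mul_pos (by exact_mod_cast hd) (by rwa [sub_pos, div_lt_one hu])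
  set r : ℝ := 2 ^ s
  have hr : 1 < r := Real.one_lt_rpow one_lt_two hs
  set C : ℝ := 2 + (r - 1)⁻¹
  refine ne_top_of_le_ne_top
    (ENNReal.rpow_ne_top_of_nonneg (y := 1 / p) (by positivity) (ENNReal.ofReal_ne_top (r := C)))
    (iSup_le fun j => ?_)
  have hweight :
      ((2 : ℝ≥0∞) ^ (j * d)) ^ ((1 / u - 1 / p) * p) * ENNReal.ofReal (r ^ j) = 1 := by
    rw [ENNReal.ofReal_pow (by positivity), ← ENNReal.ofReal_rpow_of_pos two_pos,
      ENNReal.ofReal_ofNat]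
    simp only [← ENNReal.rpow_natCast, ← ENNReal.rpow_mul]
    rw [← ENNReal.rpow_add _ _ two_ne_zero ENNReal.ofNat_ne_top, ← ENNReal.rpow_zero (x := 2)]
    congr 1
    push_cast
    rw [hs_def]
    field_simp
    ring
  have hcount : (j : ℝ≥0∞) + 2 ≤ ENNReal.ofReal C * ENNReal.ofReal (r ^ j) := by
    rw [← ENNReal.ofReal_mul (by positivity), ← ENNReal.ofReal_natCast, ← ENNReal.ofReal_ofNat,
      ← ENNReal.ofReal_add (by positivity) zero_le_two]
    exact ENNReal.ofReal_le_ofReal (add_two_le_mul_pow hr j)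
  calc ((2 : ℝ≥0∞) ^ (j * d)) ^ (1 / u - 1 / p) * ((j : ℝ≥0∞) + 2) ^ (1 / p)
      = (((2 : ℝ≥0∞) ^ (j * d)) ^ ((1 / u - 1 / p) * p) * ((j : ℝ≥0∞) + 2)) ^ (1 / p) := by
        rw [ENNReal.mul_rpow_of_nonneg _ _ (by positivity), ← ENNReal.rpow_mul, mul_assoc,
          mul_one_div_cancel hp.ne', mul_one]
    _ ≤ (((2 : ℝ≥0∞) ^ (j * d)) ^ ((1 / u - 1 / p) * p) *
          (ENNReal.ofReal C * ENNReal.ofReal (r ^ j))) ^ (1 / p) := by gcongr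
    _ = ENNReal.ofReal C ^ (1 / p) := by rw [mul_left_comm, hweight, mul_one]

lemma not_exists_tendsto_cofinite_of_infinite {α X : Type*} [TopologicalSpace X] [T1Space X]
    {f : α → X} {a b : X} (hab : a ≠ b) (ha : {x | f x = a}.Infinite)
    (hb : {x | f x = b}.Infinite) : ¬ ∃ c, Tendsto f cofinite (𝓝 c) := by
  rintro ⟨c, hc⟩
  have hlimit : ∀ x, {y | f y = x}.Infinite → x = c := fun x hx => by
    by_contra hne
    exact hx (by simpa using eventually_cofinite.1 (hc.eventually_ne (Ne.symm hne)))
  exact hab ((hlimit a ha).trans (hlimit b hb).symm)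

lemma not_exists_tendsto_indicator_range_powAxis {d : ℕ} (i : Fin d) :
    ¬ ∃ c, Tendsto ((Set.range (powAxis i)).indicator (1 : (Fin d → ℤ) → ℂ)) cofinite (𝓝 c) := by
  refine not_exists_tendsto_cofinite_of_infinite one_ne_zero ?_ ?_
  · refine (Set.infinite_range_of_injective (powAxis_injective i)).mono fun k hk => ?_
    simp [Set.indicator_of_mem hk]
  · refine (Set.infinite_range_of_injective (neg_injective.comp (powAxis_injective i))).mono ?_
    rintro _ ⟨n, rfl⟩
    refine Set.indicator_of_notMem ?_ _
    rintro ⟨n', hn'⟩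
    have := congrFun hn' i
    simp only [Function.comp_apply, powAxis, Pi.neg_apply, Pi.single_eq_same] at this
    linarith [pow_pos (two_pos : (0 : ℤ) < 2) n, pow_pos (two_pos : (0 : ℤ) < 2) n']

theorem morrey_incomparable_c0_c (d : ℕ) (hd : 0 < d) (u p : ℝ) (hp : 0 < p) (hpu : p < u) :
    (∃ lam : (Fin d → ℤ) → ℂ,
        Tendsto lam cofinite (nhds 0) ∧ morreyNorm d u p lam = ⊤) ∧
    (∃ mu : (Fin d → ℤ) → ℂ,
        morreyNorm d u p mu ≠ ⊤ ∧ ¬ ∃ c : ℂ, Tendsto mu cofinite (nhds c)) := by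
  have hu : 0 < u := hp.trans hpu
  let i : Fin d := ⟨0, hd⟩
  refine ⟨⟨polyDecay d (d / (2 * u)), tendsto_polyDecay (by positivity),
    morreyNorm_polyDecay_eq_top hd hu hp⟩, (Set.range (powAxis i)).indicator 1, ?_,
    not_exists_tendsto_indicator_range_powAxis i⟩
  refine ne_top_of_le_ne_top (iSup_two_pow_rpow_mul_add_two_rpow_ne_top hd hp hpu)
    (morreyNorm_le_iSup_of_tsum_le hp.le fun j m => ?_)
  rw [tsum_cube_indicator_one hp]
  exact_mod_cast encard_cube_inter_range_powAxis_le i j m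
end

section
/- Let $0<p_1\le u_1<\infty$ and $0<p_2\le u_2<\infty$ with $u_1\le u_2$ and $p_2/u_2\le p_1/u_1$ (so that the inclusion $m_{u_1,p_1}(\mathbb{Z}^d)\subset m_{u_2,p_2}(\mathbb{Z}^d)$ is continuous). Then the embedding operator $m_{u_1,p_1}(\mathbb{Z}^d)\hookrightarrow m_{u_2,p_2}(\mathbb{Z}^d)$ is never compact: the image of the closed unit ball of $m_{u_1,p_1}$ is not relatively compact in $m_{u_2,p_2}$. -/
open scoped ENNReal NNReal BigOperators
open Filter

/-! The unit vectors `e_k` lie in the unit ball of `ℓ_{p₁} ⊆ m_{u₁,p₁}` (for `p₁ ≤ u₁` every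
Morrey weight is at most `1`), while any two of them are at distance at least `1` in
`ℓ_∞ ⊆ m_{u₂,p₂}`, because a level-`0` dyadic cube is a single lattice point. So the image of
the unit ball contains a `1`-separated sequence and cannot be relatively compact. -/

variable {d : ℕ}

theorem inDyadic_zero_iff {m k : Fin d → ℤ} : inDyadic d 0 m k ↔ k = m := by
  simp only [inDyadic, pow_zero, one_mul, funext_iff]
  exact forall_congr' fun i => by omega

theorem lInftyNorm_le_morreyNorm {u p : ℝ} (hp : p ≠ 0) (lam : (Fin d → ℤ) → ℂ) :
    lInftyNorm d lam ≤ morreyNorm d u p lam := by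
  refine iSup_le fun m => le_iSup₂_of_le 0 m ?_
  have hcube : (∑' k : {k : Fin d → ℤ // inDyadic d 0 m k}, (‖lam k.1‖₊ : ℝ≥0∞) ^ p)
      = (‖lam m‖₊ : ℝ≥0∞) ^ p :=
    tsum_eq_single ⟨m, inDyadic_zero_iff.2 rfl⟩ fun k hk =>
      (hk (Subtype.ext (inDyadic_zero_iff.1 k.2))).elim
  simp [hcube, ENNReal.rpow_rpow_inv hp]

theorem morreyNorm_le_lpNorm {u p : ℝ} (hp : 0 < p) (hpu : p ≤ u) (lam : (Fin d → ℤ) → ℂ) :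
    morreyNorm d u p lam ≤ lpNorm d p lam := by
  refine iSup₂_le fun j m => ?_
  have hscale : ((2 : ℝ≥0∞) ^ (j * d)) ^ (1 / u - 1 / p) ≤ 1 := by
    have hexp : 1 / u - 1 / p ≤ 0 := sub_nonpos.2 (one_div_le_one_div_of_le hp hpu)
    simpa using ENNReal.rpow_le_rpow_of_exponent_le (one_le_pow₀ one_le_two) hexp
  have hcube : (∑' k : {k : Fin d → ℤ // inDyadic d j m k}, (‖lam k.1‖₊ : ℝ≥0∞) ^ p)
      ≤ ∑' k, (‖lam k‖₊ : ℝ≥0∞) ^ p :=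
    ENNReal.tsum_comp_le_tsum_of_injective Subtype.val_injective _
  calc _ ≤ 1 * (∑' k, (‖lam k‖₊ : ℝ≥0∞) ^ p) ^ (1 / p) := by gcongr
    _ = lpNorm d p lam := one_mul _

theorem lpNorm_single {p : ℝ} (hp : 0 < p) (k : Fin d → ℤ) (a : ℂ) :
    lpNorm d p (Pi.single k a) = ‖a‖₊ := by
  have hsum : (∑' j, (‖(Pi.single k a : (Fin d → ℤ) → ℂ) j‖₊ : ℝ≥0∞) ^ p) = (‖a‖₊ : ℝ≥0∞) ^ p :=
    (tsum_eq_single k fun j hj => by simp [hj, hp]).trans (by simp)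
  rw [lpNorm, hsum, one_div, ENNReal.rpow_rpow_inv hp.ne']

theorem morrey_embedding_never_compact_general (d : ℕ) (hd : 0 < d) (u₁ p₁ u₂ p₂ : ℝ)
    (hp₁ : 0 < p₁) (hpu₁ : p₁ ≤ u₁) (hp₂ : 0 < p₂) :
    ∃ ε : ℝ≥0∞, 0 < ε ∧ ∃ f : ℕ → (Fin d → ℤ) → ℂ,
      (∀ n, morreyNorm d u₁ p₁ (f n) ≤ 1) ∧
      ∀ n m : ℕ, n ≠ m → ε ≤ morreyNorm d u₂ p₂ (f n - f m) := by
  let diag : ℕ → Fin d → ℤ := fun n _ => n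
  have diag_injective : Function.Injective diag := fun n m h => by
    simpa [diag] using congrFun h ⟨0, hd⟩
  refine ⟨1, one_pos, fun n => Pi.single (diag n) 1, fun n => ?_, fun n m hnm => ?_⟩
  · calc morreyNorm d u₁ p₁ (Pi.single (diag n) 1) ≤ lpNorm d p₁ (Pi.single (diag n) 1) :=
          morreyNorm_le_lpNorm hp₁ hpu₁ _
      _ = 1 := by simp [lpNorm_single hp₁]
  · calc (1 : ℝ≥0∞)
          = ‖(Pi.single (diag n) 1 - Pi.single (diag m) 1 : (Fin d → ℤ) → ℂ) (diag n)‖₊ := by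
          simp [diag_injective.ne hnm]
      _ ≤ lInftyNorm d (Pi.single (diag n) 1 - Pi.single (diag m) 1) :=
          le_iSup_of_le (diag n) le_rfl
      _ ≤ morreyNorm d u₂ p₂ _ := lInftyNorm_le_morreyNorm hp₂.ne' _

theorem morrey_embedding_never_compact (d : ℕ) (hd : 0 < d) (u₁ p₁ u₂ p₂ : ℝ)
    (hp₁ : 0 < p₁) (hpu₁ : p₁ ≤ u₁) (hp₂ : 0 < p₂) (hpu₂ : p₂ ≤ u₂)
    (hu : u₁ ≤ u₂) (hr : p₂ / u₂ ≤ p₁ / u₁) :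
    ∃ ε : ℝ≥0∞, 0 < ε ∧ ∃ f : ℕ → (Fin d → ℤ) → ℂ,
      (∀ n, morreyNorm d u₁ p₁ (f n) ≤ 1) ∧
      ∀ n m : ℕ, n ≠ m → ε ≤ morreyNorm d u₂ p₂ (f n - f m) :=
  morrey_embedding_never_compact_general d hd u₁ p₁ u₂ p₂ hp₁ hpu₁ hp₂
end

section
/- Let $0<p_1\le u_1<\infty$ and $0<p_2\le u_2<\infty$. Then $m_{u_1,p_1}(\mathbb{Z}^d)= m_{u_2,p_2}(\mathbb{Z}^d)$ as sets with equivalent quasi-norms (equivalently, both inclusions $m_{u_1,p_1}\hookrightarrow m_{u_2,p_2}$ and $m_{u_2,p_2}\hookrightarrow m_{u_1,p_1}$ are continuous) if, and only if, $u_1=u_2$ and $p_1=p_2$. -/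
open scoped ENNReal NNReal BigOperators
open Filter

/-! The test sequences are the indicators of `2^ν ℤ^d ∩ [0, 2^J)^d` with `ν ≤ J`. Counting lattice
points cube by cube, the `m_{u,p}` quasi-norm of such an indicator lies between
`2^{d (J/u - ν/p)}` (attained on the cube `Q_{-J,0}`) and `2^{d max(0, J/u - ν/p)}`. An embedding
`m_{u₁,p₁} ↪ m_{u₂,p₂}` therefore gives `J/u₂ - ν/p₂ ≤ K + max(0, J/u₁ - ν/p₁)` for all `ν ≤ J`.
Taking `ν = 0` yields `u₁ ≤ u₂`, and taking `J ≈ ν u₁/p₁` yields `u₁/p₁ ≤ u₂/p₂`; the two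
embeddings together force equality. -/

open Set

theorem Int.encard_Ico_mul_inter_dvd {q : ℤ} (hq : 0 < q) (a b : ℤ) :
    (Ico (q * a) (q * b) ∩ {x | q ∣ x}).encard = (b - a).toNat := by
  have himage : Ico (q * a) (q * b) ∩ {x | q ∣ x} = (q * ·) '' Ico a b := by
    ext x
    constructor
    · rintro ⟨⟨hax, hxb⟩, y, rfl⟩
      exact ⟨y, ⟨le_of_mul_le_mul_left hax hq, lt_of_mul_lt_mul_left hxb hq.le⟩, rfl⟩
    · rintro ⟨y, ⟨hay, hyb⟩, rfl⟩
      exact ⟨⟨mul_le_mul_of_nonneg_left hay hq.le, mul_lt_mul_of_pos_left hyb hq⟩, y, rfl⟩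
  rw [himage, (mul_right_injective₀ hq.ne').injOn.encard_image, ← Finset.coe_Ico,
    encard_coe_eq_coe_finsetCard, Int.card_Ico]

theorem encard_Ico_two_pow_inter_dvd {j ν : ℕ} (hν : ν ≤ j) (c : ℤ) :
    (Ico (2 ^ j * c) (2 ^ j * (c + 1)) ∩ {x | (2 : ℤ) ^ ν ∣ x}).encard = 2 ^ (j - ν) := by
  have hsplit : (2 : ℤ) ^ j = 2 ^ ν * 2 ^ (j - ν) := by rw [← pow_add, Nat.add_sub_cancel' hν]
  rw [hsplit, mul_assoc, mul_assoc, Int.encard_Ico_mul_inter_dvd (by positivity),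
    ← mul_sub, add_sub_cancel_left, mul_one]
  norm_cast

theorem encard_Ico_two_pow_inter_dvd_le (j ν : ℕ) (c : ℤ) :
    (Ico (2 ^ j * c) (2 ^ j * (c + 1)) ∩ {x | (2 : ℤ) ^ ν ∣ x}).encard ≤ 2 ^ (j - ν) := by
  rcases le_or_gt ν j with hν | hj
  · exact (encard_Ico_two_pow_inter_dvd hν c).le
  rw [Nat.sub_eq_zero_of_le hj.le, pow_zero, encard_le_one_iff]
  rintro x y ⟨⟨hcx, hxc⟩, hx⟩ ⟨⟨hcy, hyc⟩, hy⟩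
  have hlen : (2 : ℤ) ^ j ≤ 2 ^ ν := pow_le_pow_right₀ one_le_two hj.le
  have hdist : |x - y| < 2 ^ ν := by rw [abs_lt]; constructor <;> linarith
  exact sub_eq_zero.1 (Int.eq_zero_of_abs_lt_dvd (dvd_sub hx hy) hdist)

def sparseCube (d J ν : ℕ) : Set (Fin d → ℤ) :=
  univ.pi fun _ => Ico 0 (2 ^ J) ∩ {x | (2 : ℤ) ^ ν ∣ x}

theorem setOf_inDyadic (d j : ℕ) (m : Fin d → ℤ) :
    {k | inDyadic d j m k} = univ.pi fun i => Ico (2 ^ j * m i) (2 ^ j * (m i + 1)) := by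
  ext k
  simp [inDyadic]

theorem encard_sparseCube {d J ν : ℕ} (hν : ν ≤ J) :
    (sparseCube d J ν).encard = 2 ^ ((J - ν) * d) := by
  have hcube : Ico (0 : ℤ) (2 ^ J) = Ico (2 ^ J * 0) (2 ^ J * (0 + 1)) := by simp
  simp only [sparseCube, encard_pi_eq_prod_encard, hcube, encard_Ico_two_pow_inter_dvd hν,
    Finset.prod_const, Finset.card_univ, Fintype.card_fin, pow_mul]

theorem encard_inDyadic_inter_sparseCube_le (d j J ν : ℕ) (m : Fin d → ℤ) :
    ({k | inDyadic d j m k} ∩ sparseCube d J ν).encard ≤ 2 ^ ((min j J - ν) * d) := by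
  rw [setOf_inDyadic, sparseCube, ← pi_inter_distrib, encard_pi_eq_prod_encard, pow_mul]
  refine (Finset.prod_le_prod' fun i _ => ?_).trans_eq (Fin.prod_const d _)
  rcases le_total j J with hjJ | hJj
  · rw [min_eq_left hjJ]
    exact (encard_le_encard (inter_subset_inter_right _ inter_subset_right)).trans
      (encard_Ico_two_pow_inter_dvd_le j ν (m i))
  · rw [min_eq_right hJj]
    refine (encard_le_encard ?_).trans (encard_Ico_two_pow_inter_dvd_le J ν 0)
    rw [mul_zero, zero_add, mul_one]
    exact inter_subset_right

theorem tsum_nnnorm_indicator_one_rpow {α E : Type*} [SeminormedAddCommGroup E] [One E]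
    [NormOneClass E] {p : ℝ} (hp : 0 < p) (s : Set α) (P : α → Prop) :
    ∑' k : {k // P k}, (‖s.indicator (1 : α → E) k.1‖₊ : ℝ≥0∞) ^ p =
      (({k | P k} ∩ s).encard : ℝ≥0∞) := by
  have hterm : ∀ k, (‖s.indicator (1 : α → E) k‖₊ : ℝ≥0∞) ^ p = s.indicator 1 k := by
    intro k
    by_cases hk : k ∈ s <;> simp [hk, hp]
  simp_rw [hterm]
  rw [← ENNReal.tsum_set_one, tsum_subtype ({k | P k} ∩ s) fun _ => 1, ← indicator_indicator]
  exact tsum_subtype {k | P k} (s.indicator 1)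

theorem two_pow_rpow_mul_two_pow_rpow (a b : ℕ) (x y : ℝ) :
    ((2 : ℝ≥0∞) ^ a) ^ x * ((2 : ℝ≥0∞) ^ b) ^ y = 2 ^ (a * x + b * y) := by
  rw [← ENNReal.rpow_natCast, ← ENNReal.rpow_natCast, ← ENNReal.rpow_mul, ← ENNReal.rpow_mul,
    ← ENNReal.rpow_add _ _ two_ne_zero ENNReal.ofNat_ne_top]

theorem morrey_exponent_le {u p : ℝ} (hp : 0 < p) (hpu : p ≤ u) (j J ν : ℕ) :
    j * (1 / u - 1 / p) + ((min j J - ν : ℕ) : ℝ) / p ≤ max 0 (J / u - ν / p) := by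
  have hslope : 1 / u - 1 / p ≤ 0 := sub_nonpos.2 (one_div_le_one_div_of_le hp hpu)
  rcases le_total (min j J) ν with hsν | hνs
  · rw [Nat.sub_eq_zero_of_le hsν, Nat.cast_zero, zero_div, add_zero]
    exact (mul_nonpos_of_nonneg_of_nonpos j.cast_nonneg hslope).trans (le_max_left _ _)
  · have hsj : ((min j J : ℕ) : ℝ) ≤ j := by exact_mod_cast min_le_left j J
    have hsJ : ((min j J : ℕ) : ℝ) ≤ J := by exact_mod_cast min_le_right j J
    refine le_trans ?_ (le_max_right _ _)
    calc (j : ℝ) * (1 / u - 1 / p) + ((min j J - ν : ℕ) : ℝ) / p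
        ≤ (min j J : ℕ) * (1 / u - 1 / p) + ((min j J : ℕ) - ν) / p := by
          rw [Nat.cast_sub hνs]
          gcongr ?_ + _
          exact mul_le_mul_of_nonpos_right hsj hslope
      _ = (min j J : ℕ) / u - ν / p := by ring
      _ ≤ J / u - ν / p := by gcongr; linarith

theorem morreyNorm_indicator_sparseCube_le (d : ℕ) {u p : ℝ} (hp : 0 < p) (hpu : p ≤ u)
    (J ν : ℕ) :
    morreyNorm d u p ((sparseCube d J ν).indicator 1) ≤ 2 ^ (d * max 0 (J / u - ν / p)) := by
  refine iSup₂_le fun j m => ?_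
  rw [tsum_nnnorm_indicator_one_rpow hp]
  calc ((2 : ℝ≥0∞) ^ (j * d)) ^ (1 / u - 1 / p) *
        (({k | inDyadic d j m k} ∩ sparseCube d J ν).encard : ℝ≥0∞) ^ (1 / p)
      ≤ ((2 : ℝ≥0∞) ^ (j * d)) ^ (1 / u - 1 / p) *
        ((2 : ℝ≥0∞) ^ ((min j J - ν) * d)) ^ (1 / p) := by
        gcongr
        exact_mod_cast encard_inDyadic_inter_sparseCube_le d j J ν m
    _ = 2 ^ (d * (j * (1 / u - 1 / p) + ((min j J - ν : ℕ) : ℝ) / p)) := by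
        rw [two_pow_rpow_mul_two_pow_rpow]
        congr 1
        push_cast
        ring
    _ ≤ 2 ^ (d * max 0 (J / u - ν / p)) :=
        ENNReal.rpow_le_rpow_of_exponent_le one_le_two
          (mul_le_mul_of_nonneg_left (morrey_exponent_le hp hpu j J ν) d.cast_nonneg)

theorem two_rpow_le_morreyNorm_indicator_sparseCube (d : ℕ) {u p : ℝ} (hp : 0 < p) {J ν : ℕ}
    (hν : ν ≤ J) :
    (2 : ℝ≥0∞) ^ (d * (J / u - ν / p)) ≤ morreyNorm d u p ((sparseCube d J ν).indicator 1) := by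
  have hcube : {k | inDyadic d J 0 k} ∩ sparseCube d J ν = sparseCube d J ν := by
    refine inter_eq_right.2 fun k hk i => ?_
    simpa using (hk i trivial).1
  refine le_of_eq_of_le ?_ (le_iSup₂_of_le J 0 le_rfl)
  rw [tsum_nnnorm_indicator_one_rpow hp, hcube, encard_sparseCube hν]
  push_cast
  rw [two_pow_rpow_mul_two_pow_rpow]
  congr 1
  push_cast [Nat.cast_sub hν]
  ring

theorem nonpos_of_forall_nat_mul_le {𝕜 : Type*} [Field 𝕜] [LinearOrder 𝕜] [IsStrictOrderedRing 𝕜]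
    [Archimedean 𝕜] {a K : 𝕜} (h : ∀ n : ℕ, n * a ≤ K) : a ≤ 0 := by
  by_contra! ha
  obtain ⟨n, hn⟩ := exists_nat_gt (K / a)
  exact (h n).not_gt ((div_lt_iff₀ ha).1 hn)

theorem exists_exponent_bound_of_morrey_embedding {d : ℕ} (hd : 0 < d) {u₁ p₁ u₂ p₂ : ℝ}
    (hp₁ : 0 < p₁) (hpu₁ : p₁ ≤ u₁) (hp₂ : 0 < p₂) {C : ℝ≥0}
    (hC : ∀ lam : (Fin d → ℤ) → ℂ, morreyNorm d u₁ p₁ lam ≠ ⊤ →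
      morreyNorm d u₂ p₂ lam ≤ C * morreyNorm d u₁ p₁ lam) :
    ∃ K : ℝ, ∀ J ν : ℕ, ν ≤ J → J / u₂ - ν / p₂ ≤ K + max 0 (J / u₁ - ν / p₁) := by
  obtain ⟨N, hN⟩ := ENNReal.exists_nat_gt (ENNReal.coe_ne_top (r := C))
  have hCN : (C : ℝ≥0∞) ≤ 2 ^ (N : ℝ) := by
    rw [ENNReal.rpow_natCast]
    exact hN.le.trans (by exact_mod_cast N.lt_two_pow_self.le)
  have hd' : (0 : ℝ) < d := by exact_mod_cast hd
  refine ⟨N / d, fun J ν hν => ?_⟩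
  set lam := (sparseCube d J ν).indicator (1 : (Fin d → ℤ) → ℂ)
  have hupper := morreyNorm_indicator_sparseCube_le d hp₁ hpu₁ J ν
  have hfin : morreyNorm d u₁ p₁ lam ≠ ⊤ :=
    ne_top_of_le_ne_top (ENNReal.rpow_ne_top_of_nonneg' two_pos ENNReal.ofNat_ne_top) hupper
  have h2 : (2 : ℝ≥0∞) ^ (d * (J / u₂ - ν / p₂)) ≤ 2 ^ (N + d * max 0 (J / u₁ - ν / p₁)) :=
    calc (2 : ℝ≥0∞) ^ (d * (J / u₂ - ν / p₂)) ≤ morreyNorm d u₂ p₂ lam :=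
          two_rpow_le_morreyNorm_indicator_sparseCube d hp₂ hν
      _ ≤ C * morreyNorm d u₁ p₁ lam := hC lam hfin
      _ ≤ 2 ^ (N : ℝ) * 2 ^ (d * max 0 (J / u₁ - ν / p₁)) := by gcongr
      _ = 2 ^ (N + d * max 0 (J / u₁ - ν / p₁)) :=
          (ENNReal.rpow_add _ _ two_ne_zero ENNReal.ofNat_ne_top).symm
  have h2' : d * (J / u₂ - ν / p₂) ≤ N + d * max 0 (J / u₁ - ν / p₁) := le_of_not_gt fun hlt =>
    (ENNReal.rpow_lt_rpow_of_exponent_lt ENNReal.one_lt_two ENNReal.ofNat_ne_top hlt).not_ge h2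
  rw [div_add' _ _ _ hd'.ne', le_div_iff₀ hd']
  linarith

theorem le_and_div_le_of_exponent_bound {u₁ p₁ u₂ p₂ K : ℝ} (hp₁ : 0 < p₁) (hpu₁ : p₁ ≤ u₁)
    (hp₂ : 0 < p₂) (hpu₂ : p₂ ≤ u₂)
    (h : ∀ J ν : ℕ, ν ≤ J → J / u₂ - ν / p₂ ≤ K + max 0 (J / u₁ - ν / p₁)) :
    u₁ ≤ u₂ ∧ u₁ / p₁ ≤ u₂ / p₂ := by
  have hu₁ : 0 < u₁ := hp₁.trans_le hpu₁
  have hu₂ : 0 < u₂ := hp₂.trans_le hpu₂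
  constructor
  · have hslope : 1 / u₂ - 1 / u₁ ≤ 0 := by
      refine nonpos_of_forall_nat_mul_le (K := K) fun J => ?_
      have hJ := h J 0 J.zero_le
      simp only [CharP.cast_eq_zero, zero_div, sub_zero] at hJ
      rw [max_eq_right (by positivity)] at hJ
      linarith [show (J : ℝ) * (1 / u₂ - 1 / u₁) = J / u₂ - J / u₁ by ring]
    exact (one_div_le_one_div hu₂ hu₁).1 (sub_nonpos.1 hslope)
  · have hratio : 1 ≤ u₁ / p₁ := (one_le_div hp₁).2 hpu₁
    suffices hslope : u₁ / p₁ - u₂ / p₂ ≤ 0 from sub_nonpos.1 hslope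
    refine nonpos_of_forall_nat_mul_le (K := u₂ * (K + 1 / u₁)) fun ν => ?_
    -- `J = ⌈ν u₁ / p₁⌉` keeps `J / u₁ - ν / p₁` in `[0, 1 / u₁)`.
    set J := ⌈ν * (u₁ / p₁)⌉₊
    have hJ₁ : ν * (u₁ / p₁) ≤ J := Nat.le_ceil _
    have hJ₂ : (J : ℝ) < ν * (u₁ / p₁) + 1 := Nat.ceil_lt_add_one (by positivity)
    have hνJ : ν ≤ J := by
      exact_mod_cast (le_mul_of_one_le_right ν.cast_nonneg hratio).trans hJ₁
    have hmax : max 0 (J / u₁ - ν / p₁) ≤ 1 / u₁ := by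
      refine max_le (by positivity) ?_
      have hJu : (J : ℝ) / u₁ ≤ (ν * (u₁ / p₁) + 1) / u₁ := by gcongr
      have hsplit : (ν * (u₁ / p₁) + 1) / u₁ = ν / p₁ + 1 / u₁ := by field_simp
      linarith
    have hlow : ν * (u₁ / p₁) / u₂ ≤ J / u₂ := by gcongr
    have hscale : ν * (u₁ / p₁ - u₂ / p₂) = u₂ * (ν * (u₁ / p₁) / u₂ - ν / p₂) := by
      field_simp
    rw [hscale]
    exact mul_le_mul_of_nonneg_left (by linarith [h J ν hνJ]) hu₂.le

theorem le_and_div_le_of_morrey_embedding {d : ℕ} (hd : 0 < d) {u₁ p₁ u₂ p₂ : ℝ}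
    (hp₁ : 0 < p₁) (hpu₁ : p₁ ≤ u₁) (hp₂ : 0 < p₂) (hpu₂ : p₂ ≤ u₂) {C : ℝ≥0}
    (hC : ∀ lam : (Fin d → ℤ) → ℂ, morreyNorm d u₁ p₁ lam ≠ ⊤ →
      morreyNorm d u₂ p₂ lam ≤ C * morreyNorm d u₁ p₁ lam) :
    u₁ ≤ u₂ ∧ u₁ / p₁ ≤ u₂ / p₂ :=
  let ⟨_, hK⟩ := exists_exponent_bound_of_morrey_embedding hd hp₁ hpu₁ hp₂ hC
  le_and_div_le_of_exponent_bound hp₁ hpu₁ hp₂ hpu₂ hK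

theorem morrey_equal_iff (d : ℕ) (hd : 0 < d) (u₁ p₁ u₂ p₂ : ℝ)
    (hp₁ : 0 < p₁) (hpu₁ : p₁ ≤ u₁) (hp₂ : 0 < p₂) (hpu₂ : p₂ ≤ u₂) :
    ((∃ C : ℝ≥0, 0 < C ∧ ∀ lam : (Fin d → ℤ) → ℂ, morreyNorm d u₁ p₁ lam ≠ ⊤ →
        morreyNorm d u₂ p₂ lam ≤ (C : ℝ≥0∞) * morreyNorm d u₁ p₁ lam) ∧
     (∃ C : ℝ≥0, 0 < C ∧ ∀ lam : (Fin d → ℤ) → ℂ, morreyNorm d u₂ p₂ lam ≠ ⊤ →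
        morreyNorm d u₁ p₁ lam ≤ (C : ℝ≥0∞) * morreyNorm d u₂ p₂ lam)) ↔
      (u₁ = u₂ ∧ p₁ = p₂) := by
  constructor
  · rintro ⟨⟨C₁, -, hC₁⟩, ⟨C₂, -, hC₂⟩⟩
    obtain ⟨hu₁₂, hr₁₂⟩ := le_and_div_le_of_morrey_embedding hd hp₁ hpu₁ hp₂ hpu₂ hC₁
    obtain ⟨hu₂₁, hr₂₁⟩ := le_and_div_le_of_morrey_embedding hd hp₂ hpu₂ hp₁ hpu₁ hC₂
    obtain rfl : u₁ = u₂ := le_antisymm hu₁₂ hu₂₁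
    have hu : u₁ ≠ 0 := (hp₁.trans_le hpu₁).ne'
    exact ⟨rfl, inv_injective (mul_left_cancel₀ hu (le_antisymm hr₁₂ hr₂₁))⟩
  · rintro ⟨rfl, rfl⟩
    exact ⟨⟨1, one_pos, fun _ _ => by simp⟩, ⟨1, one_pos, fun _ _ => by simp⟩⟩
end

section
/- Let $0<p_1\le u_1<\infty$ and $0<u_2<\infty$. Then $m_{u_1,p_1}(\mathbb{Z}^d)\hookrightarrow \ell_{u_2}(\mathbb{Z}^d)$ continuously if, and only if, $u_1\le u_2$ and $p_1=u_1$. In particular, if $p_1<u_1$ then $m_{u_1,p_1}(\mathbb{Z}^d)$ does not embed continuously into any space $\ell_r(\mathbb{Z}^d)$ with $0<r<\infty$. -/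
open scoped ENNReal NNReal BigOperators
open Filter

/-!
For `p = u` the Morrey norm bounds the `ℓ_u` mass of every dyadic cube, and the `2^d` cubes
`Q_{-J,m}`, `m ∈ {-1,0}^d`, exhaust `ℤ^d` as `J → ∞`; so `m_{u,u} ↪ ℓ_u ↪ ℓ_r` for `u ≤ r`.

Conversely, test the embedding on the indicator of the sparse grid `{k ∈ [0,2^j)^d : 2^s ∣ k}`.
Its `ℓ_r` norm is `2^((j-s)d/r)`, while a cube of side `2^ν` meets at most
`2^(min (ν - min ν s) (j - s) * d)` grid points, so its `m_{u,p}` norm is at most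
`2^max(0, jd/u - sd/p)`. Taking `s = 0` forces `u ≤ r`; taking `s = ⌈jp/u⌉` keeps the Morrey
norm at most `1` while `j - s ≥ j(1 - p/u) - 1` grows, which forces `p = u`.
-/

open Finset

lemma ENNReal.tsum_rpow_rpow_le_of_le {ι : Type*} (f : ι → ℝ≥0∞) {a b : ℝ} (ha : 0 < a)
    (hab : a ≤ b) : (∑' i, f i ^ b) ^ (1 / b) ≤ (∑' i, f i ^ a) ^ (1 / a) := by
  set T := (∑' i, f i ^ a) ^ (1 / a) with hT
  have hb : 0 < b := ha.trans_le hab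
  have hTa : T ^ a = ∑' i, f i ^ a := by
    rw [hT, one_div, ENNReal.rpow_inv_rpow ha.ne']
  have hfT (i : ι) : f i ≤ T := by
    calc f i = (f i ^ a) ^ (1 / a) := by rw [one_div, ENNReal.rpow_rpow_inv ha.ne']
      _ ≤ T := by rw [hT]; gcongr; exact ENNReal.le_tsum i
  have hsplit (x : ℝ≥0∞) : x ^ b = x ^ a * x ^ (b - a) := by
    rw [← ENNReal.rpow_add_of_nonneg _ _ ha.le (sub_nonneg.2 hab), add_sub_cancel]
  calc (∑' i, f i ^ b) ^ (1 / b) ≤ (∑' i, f i ^ a * T ^ (b - a)) ^ (1 / b) := by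
        gcongr with i
        rw [hsplit]
        gcongr
        exact hfT i
    _ = T := by
        rw [ENNReal.tsum_mul_right, ← hTa, ← hsplit, one_div, ENNReal.rpow_rpow_inv hb.ne']

lemma lpNorm_antitone {d : ℕ} {a b : ℝ} (ha : 0 < a) (hab : a ≤ b) (lam : (Fin d → ℤ) → ℂ) :
    lpNorm d b lam ≤ lpNorm d a lam :=
  ENNReal.tsum_rpow_rpow_le_of_le _ ha hab

lemma Int.card_filter_dvd_Ico_mul {r : ℤ} (hr : 0 < r) (b c : ℤ) :
    #{x ∈ Ico (r * b) (r * c) | r ∣ x} = (c - b).toNat := by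
  have hq : (r : ℚ) ≠ 0 := by exact_mod_cast hr.ne'
  rw [Int.Ico_filter_dvd_eq _ _ hr, card_map, Int.card_Ico]
  push_cast
  rw [mul_div_cancel_left₀ _ hq, mul_div_cancel_left₀ _ hq, Int.ceil_intCast, Int.ceil_intCast]

lemma Int.card_filter_dvd_Ico_pow_two_le (s t : ℕ) (a : ℤ) :
    #{x ∈ Ico (2 ^ t * a) (2 ^ t * (a + 1)) | (2 : ℤ) ^ s ∣ x} ≤ 2 ^ (t - min t s) := by
  rcases le_total s t with hst | hts
  · have h2t : (2 : ℤ) ^ t = 2 ^ s * 2 ^ (t - s) := by rw [← pow_add, Nat.add_sub_cancel' hst]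
    rw [h2t, mul_assoc, mul_assoc, Int.card_filter_dvd_Ico_mul (by positivity), min_eq_right hst]
    rw [mul_add, mul_one, add_sub_cancel_left]
    exact_mod_cast le_rfl
  · rw [min_eq_left hts, Nat.sub_self, pow_zero, card_le_one]
    intro x hx y hy
    simp only [mem_filter, mem_Ico] at hx hy
    have hlt : |x - y| < 2 ^ s := by
      calc |x - y| < 2 ^ t := by rw [abs_sub_lt_iff]; constructor <;> linarith
        _ ≤ 2 ^ s := pow_le_pow_right₀ (by norm_num) hts
    exact sub_eq_zero.1 (Int.eq_zero_of_abs_lt_dvd (dvd_sub hx.2 hy.2) hlt)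

noncomputable def gridCoord (j s : ℕ) : Finset ℤ := {x ∈ Ico 0 (2 ^ j) | (2 : ℤ) ^ s ∣ x}

lemma card_gridCoord {j s : ℕ} (hsj : s ≤ j) : #(gridCoord j s) = 2 ^ (j - s) := by
  have h2j : (2 : ℤ) ^ j = 2 ^ s * 2 ^ (j - s) := by rw [← pow_add, Nat.add_sub_cancel' hsj]
  have h0 : (0 : ℤ) = 2 ^ s * 0 := by ring
  rw [gridCoord, h2j, h0, Int.card_filter_dvd_Ico_mul (by positivity), sub_zero]
  exact_mod_cast rfl

lemma card_gridCoord_filter_le {j s : ℕ} (hsj : s ≤ j) (ν : ℕ) (a : ℤ) :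
    #{x ∈ gridCoord j s | 2 ^ ν * a ≤ x ∧ x < 2 ^ ν * (a + 1)} ≤
      2 ^ min (ν - min ν s) (j - s) := by
  rcases min_choice (ν - min ν s) (j - s) with h | h <;> rw [h]
  · refine le_trans (card_le_card fun x hx => ?_) (Int.card_filter_dvd_Ico_pow_two_le s ν a)
    simp only [gridCoord, mem_filter, mem_Ico] at hx ⊢
    exact ⟨hx.2, hx.1.2⟩
  · exact (card_filter_le _ _).trans (card_gridCoord hsj).le

noncomputable def grid (d j s : ℕ) : Finset (Fin d → ℤ) :=
  Fintype.piFinset fun _ => gridCoord j s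

noncomputable def gridIndicator (d j s : ℕ) : (Fin d → ℤ) → ℂ :=
  (grid d j s : Set (Fin d → ℤ)).indicator 1

lemma enorm_gridIndicator_rpow {d j s : ℕ} {p : ℝ} (hp : 0 < p) (k : Fin d → ℤ) :
    (‖gridIndicator d j s k‖₊ : ℝ≥0∞) ^ p = (grid d j s : Set (Fin d → ℤ)).indicator 1 k := by
  by_cases hk : k ∈ (grid d j s : Set (Fin d → ℤ)) <;>
    simp [gridIndicator, hk, ENNReal.zero_rpow_of_pos hp]

lemma ENNReal.tsum_indicator_one {α : Type*} (s : Finset α) :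
    ∑' k, (s : Set α).indicator 1 k = (#s : ℝ≥0∞) := by
  rw [← _root_.tsum_subtype]
  simp

lemma lpNorm_gridIndicator {d j s : ℕ} {r : ℝ} (hr : 0 < r) (hsj : s ≤ j) :
    lpNorm d r (gridIndicator d j s) = 2 ^ (((j : ℝ) - s) * d / r) := by
  simp only [lpNorm, enorm_gridIndicator_rpow hr, ENNReal.tsum_indicator_one, grid,
    Fintype.card_piFinset, prod_const, card_gridCoord hsj, card_univ, Fintype.card_fin]
  rw [← pow_mul, Nat.cast_pow, Nat.cast_ofNat, ← ENNReal.rpow_natCast, ← ENNReal.rpow_mul]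
  push_cast [Nat.cast_sub hsj]
  ring_nf

lemma tsum_inDyadic_gridIndicator_le {d j s : ℕ} (hsj : s ≤ j) {p : ℝ} (hp : 0 < p) (ν : ℕ)
    (m : Fin d → ℤ) :
    ∑' k : {k // inDyadic d ν m k}, (‖gridIndicator d j s k.1‖₊ : ℝ≥0∞) ^ p ≤
      2 ^ (min (ν - min ν s) (j - s) * d) := by
  classical
  set F : Finset (Fin d → ℤ) := Fintype.piFinset fun i =>
    {x ∈ gridCoord j s | 2 ^ ν * m i ≤ x ∧ x < 2 ^ ν * (m i + 1)} with hF
  have hsub : {k | inDyadic d ν m k} ∩ (grid d j s : Set (Fin d → ℤ)) ⊆ F := by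
    intro k ⟨hk, hkg⟩
    simp only [grid, mem_coe, Fintype.mem_piFinset] at hkg
    simpa [hF, Fintype.mem_piFinset] using fun i => ⟨hkg i, hk i⟩
  calc ∑' k : {k // inDyadic d ν m k}, (‖gridIndicator d j s k.1‖₊ : ℝ≥0∞) ^ p
      = ∑' k, ({k | inDyadic d ν m k} ∩ (grid d j s : Set (Fin d → ℤ))).indicator 1 k := by
        simp only [enorm_gridIndicator_rpow hp]
        rw [← Set.indicator_indicator]
        exact _root_.tsum_subtype {k | inDyadic d ν m k} _
    _ ≤ ∑' k, (F : Set (Fin d → ℤ)).indicator 1 k :=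
        ENNReal.tsum_le_tsum (Set.indicator_le_indicator_of_subset hsub (fun _ => zero_le))
    _ ≤ 2 ^ (min (ν - min ν s) (j - s) * d) := by
        rw [ENNReal.tsum_indicator_one, hF, Fintype.card_piFinset, pow_mul]
        exact_mod_cast (prod_le_pow_card _ _ _ fun i _ =>
          card_gridCoord_filter_le hsj ν (m i)).trans (by simp)

lemma dyadic_exponent_le {a b ν j s n : ℝ} (hb : 0 ≤ b) (hba : b ≤ a) (hν : 0 ≤ ν)
    (hn₁ : n ≤ ν - min ν s) (hn₂ : n ≤ j - s) : n * a + ν * (b - a) ≤ max 0 (j * b - s * a) := by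
  rcases le_total ν s with hνs | hsν
  · rw [min_eq_left hνs, sub_self] at hn₁
    have : n * a ≤ 0 := mul_nonpos_of_nonpos_of_nonneg hn₁ (hb.trans hba)
    have : ν * (b - a) ≤ 0 := mul_nonpos_of_nonneg_of_nonpos hν (by linarith)
    exact le_max_of_le_left (by linarith)
  rw [min_eq_right hsν] at hn₁
  refine le_max_of_le_right ?_
  rcases le_total ν j with hνj | hjν
  · nlinarith
  · nlinarith

lemma morreyNorm_gridIndicator_le {d j s : ℕ} (hsj : s ≤ j) {u p : ℝ} (hp : 0 < p)
    (hpu : p ≤ u) :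
    morreyNorm d u p (gridIndicator d j s) ≤ 2 ^ max 0 (j * d / u - s * d / p) := by
  refine iSup₂_le fun ν m => ?_
  have hu : 0 < u := hp.trans_le hpu
  set n := min (ν - min ν s) (j - s)
  have hn₁ : (n : ℝ) ≤ ν - min (ν : ℝ) s := by
    rw [← Nat.cast_min, ← Nat.cast_sub (min_le_left ν s)]; exact_mod_cast min_le_left _ _
  have hn₂ : (n : ℝ) ≤ j - s := by
    rw [← Nat.cast_sub hsj]; exact_mod_cast min_le_right _ _
  have hexp := dyadic_exponent_le (a := d / p) (b := d / u) (by positivity)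
    (div_le_div_of_nonneg_left d.cast_nonneg hp hpu) ν.cast_nonneg hn₁ hn₂
  calc ((2 : ℝ≥0∞) ^ (ν * d)) ^ (1 / u - 1 / p) *
        (∑' k : {k // inDyadic d ν m k}, (‖gridIndicator d j s k.1‖₊ : ℝ≥0∞) ^ p) ^ (1 / p)
      ≤ ((2 : ℝ≥0∞) ^ (ν * d)) ^ (1 / u - 1 / p) * ((2 : ℝ≥0∞) ^ (n * d)) ^ (1 / p) := by
        gcongr
        exact tsum_inDyadic_gridIndicator_le hsj hp ν m
    _ = 2 ^ (n * (d / p) + ν * (d / u - d / p)) := by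
        rw [← ENNReal.rpow_natCast, ← ENNReal.rpow_natCast, ← ENNReal.rpow_mul, ← ENNReal.rpow_mul,
          ← ENNReal.rpow_add _ _ two_ne_zero ENNReal.ofNat_ne_top]
        push_cast
        ring_nf
    _ ≤ 2 ^ max 0 (j * d / u - s * d / p) := by
        refine ENNReal.rpow_le_rpow_of_exponent_le one_le_two (hexp.trans_eq ?_)
        ring_nf

lemma tsum_inDyadic_le_morreyNorm_rpow {d : ℕ} {u : ℝ} (hu : 0 < u) (lam : (Fin d → ℤ) → ℂ)
    (j : ℕ) (m : Fin d → ℤ) :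
    ∑' k : {k // inDyadic d j m k}, (‖lam k.1‖₊ : ℝ≥0∞) ^ u ≤ morreyNorm d u u lam ^ u := by
  have h : _ ≤ morreyNorm d u u lam := le_iSup₂ (f := fun (j : ℕ) (m : Fin d → ℤ) =>
    ((2 : ℝ≥0∞) ^ (j * d)) ^ (1 / u - 1 / u) *
      (∑' k : {k // inDyadic d j m k}, (‖lam k.1‖₊ : ℝ≥0∞) ^ u) ^ (1 / u)) j m
  rw [sub_self, ENNReal.rpow_zero, one_mul] at h
  simpa only [one_div, ENNReal.rpow_inv_rpow hu.ne'] using ENNReal.rpow_le_rpow h hu.le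

lemma exists_inDyadic_of_abs_lt {d J : ℕ} {k : Fin d → ℤ} (hk : ∀ i, |k i| < 2 ^ J) :
    ∃ m ∈ Fintype.piFinset fun _ => ({-1, 0} : Finset ℤ), inDyadic d J m k := by
  refine ⟨fun i => if 0 ≤ k i then 0 else -1, ?_, fun i => ?_⟩
  · simp only [Fintype.mem_piFinset]
    intro i
    split_ifs <;> simp
  · have := abs_lt.1 (hk i)
    by_cases h : 0 ≤ k i <;> simp only [h, if_true, if_false] <;> constructor <;> linarith

lemma exists_abs_lt_two_pow {d : ℕ} (F : Finset (Fin d → ℤ)) :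
    ∃ J : ℕ, ∀ k ∈ F, ∀ i, |k i| < 2 ^ J := by
  refine ⟨F.sup fun k => univ.sup fun i => (k i).natAbs, fun k hk i => ?_⟩
  rw [Int.abs_eq_natAbs]
  exact_mod_cast ((le_sup (f := fun i => (k i).natAbs) (mem_univ i)).trans
    (le_sup (f := fun k : Fin d → ℤ => univ.sup fun i => (k i).natAbs) hk)).trans_lt
    Nat.lt_two_pow_self

lemma lpNorm_le_morreyNorm {d : ℕ} {u : ℝ} (hu : 0 < u) (lam : (Fin d → ℤ) → ℂ) :
    lpNorm d u lam ≤ (2 : ℝ≥0∞) ^ ((d : ℝ) / u) * morreyNorm d u u lam := by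
  set g := fun k => (‖lam k‖₊ : ℝ≥0∞) ^ u
  set M := morreyNorm d u u lam
  set S : Finset (Fin d → ℤ) := Fintype.piFinset fun _ => ({-1, 0} : Finset ℤ)
  have hfin (F : Finset (Fin d → ℤ)) : ∑ k ∈ F, g k ≤ 2 ^ d * M ^ u := by
    obtain ⟨J, hJ⟩ := exists_abs_lt_two_pow F
    calc ∑ k ∈ F, g k ≤ ∑ k ∈ F, ∑ m ∈ S, {k | inDyadic d J m k}.indicator g k := by
          refine sum_le_sum fun k hk => ?_
          obtain ⟨m, hm, hkm⟩ := exists_inDyadic_of_abs_lt (hJ k hk)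
          exact (Set.indicator_of_mem hkm g).symm.le.trans
            (single_le_sum (f := fun m => {k | inDyadic d J m k}.indicator g k)
              (fun _ _ => zero_le) hm)
      _ = ∑ m ∈ S, ∑ k ∈ F, {k | inDyadic d J m k}.indicator g k := sum_comm
      _ ≤ ∑ m ∈ S, ∑' k : {k // inDyadic d J m k}, g k.1 := by
          refine sum_le_sum fun m _ => (ENNReal.sum_le_tsum F).trans_eq ?_
          exact (_root_.tsum_subtype {k | inDyadic d J m k} g).symm
      _ ≤ ∑ m ∈ S, M ^ u := sum_le_sum fun m _ => tsum_inDyadic_le_morreyNorm_rpow hu lam J m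
      _ = 2 ^ d * M ^ u := by simp [S]
  calc lpNorm d u lam = (∑' k, g k) ^ (1 / u) := rfl
    _ ≤ (2 ^ d * M ^ u) ^ (1 / u) := by
        gcongr
        rw [ENNReal.tsum_eq_iSup_sum]
        exact iSup_le hfin
    _ = (2 : ℝ≥0∞) ^ ((d : ℝ) / u) * M := by
        rw [ENNReal.mul_rpow_of_nonneg _ _ (by positivity), ← ENNReal.rpow_natCast,
          ← ENNReal.rpow_mul, ← ENNReal.rpow_mul, mul_one_div, mul_one_div_cancel hu.ne',
          ENNReal.rpow_one]

def MorreyEmbedsLp (d : ℕ) (u p r : ℝ) : Prop :=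
  ∃ C : ℝ≥0, 0 < C ∧ ∀ lam : (Fin d → ℤ) → ℂ, morreyNorm d u p lam ≠ ⊤ →
    lpNorm d r lam ≤ (C : ℝ≥0∞) * morreyNorm d u p lam

lemma morreyEmbedsLp_of_le {d : ℕ} {u r : ℝ} (hu : 0 < u) (hur : u ≤ r) :
    MorreyEmbedsLp d u u r := by
  refine ⟨2 ^ ((d : ℝ) / u), NNReal.rpow_pos two_pos, fun lam _ => ?_⟩
  rw [ENNReal.coe_rpow_of_ne_zero two_ne_zero, ENNReal.coe_ofNat]
  exact (lpNorm_antitone hu hur lam).trans (lpNorm_le_morreyNorm hu lam)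

lemma nonpos_of_forall_nat_mul_le_s9 {c K : ℝ} (h : ∀ j : ℕ, j * c ≤ K) : c ≤ 0 := by
  by_contra! hc
  obtain ⟨j, hj⟩ := exists_nat_gt (K / c)
  linarith [h j, (div_lt_iff₀ hc).1 hj]

namespace MorreyEmbedsLp

variable {d : ℕ} {u p r : ℝ}

lemma exists_exponent_bound (h : MorreyEmbedsLp d u p r) (hp : 0 < p) (hpu : p ≤ u)
    (hr : 0 < r) :
    ∃ K : ℝ, ∀ j s : ℕ, s ≤ j → ((j : ℝ) - s) * d / r ≤ K + max 0 (j * d / u - s * d / p) := by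
  obtain ⟨C, -, hC⟩ := h
  obtain ⟨n, hn⟩ := pow_unbounded_of_one_lt C one_lt_two
  refine ⟨n, fun j s hsj => ?_⟩
  have hM := morreyNorm_gridIndicator_le (d := d) hsj hp hpu
  have hfin : morreyNorm d u p (gridIndicator d j s) ≠ ⊤ :=
    ne_top_of_le_ne_top (ENNReal.rpow_ne_top_of_nonneg (le_max_left _ _) ENNReal.ofNat_ne_top) hM
  have hle : (2 : ℝ≥0∞) ^ (((j : ℝ) - s) * d / r) ≤
      2 ^ ((n : ℝ) + max 0 (j * d / u - s * d / p)) :=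
    calc (2 : ℝ≥0∞) ^ (((j : ℝ) - s) * d / r) = lpNorm d r (gridIndicator d j s) :=
          (lpNorm_gridIndicator hr hsj).symm
      _ ≤ C * morreyNorm d u p (gridIndicator d j s) := hC _ hfin
      _ ≤ 2 ^ n * 2 ^ max 0 (j * d / u - s * d / p) := by
          gcongr
          exact_mod_cast hn.le
      _ = 2 ^ ((n : ℝ) + max 0 (j * d / u - s * d / p)) := by
          rw [ENNReal.rpow_add _ _ two_ne_zero ENNReal.ofNat_ne_top, ENNReal.rpow_natCast]
  by_contra! hlt
  exact (ENNReal.rpow_lt_rpow_of_exponent_lt (x := 2) (by norm_num) ENNReal.ofNat_ne_top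
    hlt).not_ge hle

lemma le_lpExponent (h : MorreyEmbedsLp d u p r) (hd : 0 < d) (hp : 0 < p) (hpu : p ≤ u)
    (hr : 0 < r) : u ≤ r := by
  have hu : 0 < u := hp.trans_le hpu
  obtain ⟨K, hK⟩ := h.exists_exponent_bound hp hpu hr
  have hslope : (d : ℝ) * (1 / r - 1 / u) ≤ 0 := nonpos_of_forall_nat_mul_le_s9 (K := K) fun j => by
    have := hK j 0 j.zero_le
    rw [Nat.cast_zero, sub_zero, zero_mul, zero_div, sub_zero,
      max_eq_right (by positivity)] at this
    linarith [show (j : ℝ) * (d * (1 / r - 1 / u)) = j * d / r - j * d / u by ring]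
  have : 1 / r ≤ 1 / u := by
    nlinarith [show (0 : ℝ) < d by exact_mod_cast hd]
  exact (one_div_le_one_div hr hu).1 this

lemma le_morreyExponent (h : MorreyEmbedsLp d u p r) (hd : 0 < d) (hp : 0 < p) (hpu : p ≤ u)
    (hr : 0 < r) : u ≤ p := by
  have hu : 0 < u := hp.trans_le hpu
  obtain ⟨K, hK⟩ := h.exists_exponent_bound hp hpu hr
  have hslope : (1 - p / u) * (d / r) ≤ 0 :=
    nonpos_of_forall_nat_mul_le_s9 (K := K + d / r) fun j => by
    set s := ⌈j * p / u⌉₊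
    have hs₁ : (j : ℝ) * p / u ≤ s := Nat.le_ceil _
    have hs₂ : (s : ℝ) < j * p / u + 1 := Nat.ceil_lt_add_one (by positivity)
    have hsj : s ≤ j := Nat.ceil_le.2 <| by
      rw [mul_div_assoc]
      exact mul_le_of_le_one_right j.cast_nonneg ((div_le_one hu).2 hpu)
    have hmax : (j : ℝ) * d / u - s * d / p ≤ 0 := by
      have : (j : ℝ) * d / u = j * p / u * (d / p) := by field_simp
      rw [sub_nonpos, this, mul_div_assoc (s : ℝ)]
      exact mul_le_mul_of_nonneg_right hs₁ (by positivity)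
    have := hK j s hsj
    rw [max_eq_left hmax] at this
    calc (j : ℝ) * ((1 - p / u) * (d / r)) = (j - j * p / u) * d / r := by ring
      _ ≤ (j - s + 1) * d / r := by gcongr; linarith
      _ = (j - s) * d / r + d / r := by ring
      _ ≤ K + d / r := by linarith
  have hdr : (0 : ℝ) < d / r := div_pos (by exact_mod_cast hd) hr
  have : 1 - p / u ≤ 0 := le_of_not_gt fun h => (mul_pos h hdr).not_ge hslope
  exact (one_le_div hu).1 (by linarith)

end MorreyEmbedsLp

theorem morrey_embeds_lp_iff (d : ℕ) (hd : 0 < d) (u₁ p₁ u₂ : ℝ)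
    (hp₁ : 0 < p₁) (hpu₁ : p₁ ≤ u₁) (hu₂ : 0 < u₂) :
    ((∃ C : ℝ≥0, 0 < C ∧ ∀ lam : (Fin d → ℤ) → ℂ, morreyNorm d u₁ p₁ lam ≠ ⊤ →
        lpNorm d u₂ lam ≤ (C : ℝ≥0∞) * morreyNorm d u₁ p₁ lam) ↔
      (u₁ ≤ u₂ ∧ p₁ = u₁)) ∧
    (p₁ < u₁ → ∀ r : ℝ, 0 < r →
      ¬ ∃ C : ℝ≥0, 0 < C ∧ ∀ lam : (Fin d → ℤ) → ℂ, morreyNorm d u₁ p₁ lam ≠ ⊤ →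
          lpNorm d r lam ≤ (C : ℝ≥0∞) * morreyNorm d u₁ p₁ lam) := by
  change (MorreyEmbedsLp d u₁ p₁ u₂ ↔ _) ∧ (_ → ∀ r : ℝ, 0 < r → ¬ MorreyEmbedsLp d u₁ p₁ r)
  refine ⟨⟨fun h => ?_, ?_⟩, fun hlt r hr h => ?_⟩
  · exact ⟨h.le_lpExponent hd hp₁ hpu₁ hu₂,
      le_antisymm hpu₁ (h.le_morreyExponent hd hp₁ hpu₁ hu₂)⟩
  · rintro ⟨h, rfl⟩
    exact morreyEmbedsLp_of_le hp₁ h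
  · exact hlt.not_ge (h.le_morreyExponent hd hp₁ hpu₁ hr)
end

section
/- Let $0<u_1<\infty$ and $0<p_2\le u_2<\infty$. Then $\ell_{u_1}(\mathbb{Z}^d)\hookrightarrow m_{u_2,p_2}(\mathbb{Z}^d)$ continuously if, and only if, $u_1\le u_2$. -/
open scoped ENNReal NNReal BigOperators
open Filter

/-! If `u₁ ≤ u₂`, then on a cube `Q` of `N = 2^{jd}` lattice points the power-mean inequality
gives `N^{1/u₂ - 1/p₂} ‖λ‖_{ℓ_{p₂}(Q)} ≤ ‖λ‖_{ℓ_{u₂}(Q)}`, and `‖λ‖_{ℓ_{u₂}} ≤ ‖λ‖_{ℓ_{u₁}}`; so the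
embedding holds with constant `1`. Conversely, the indicator of such a cube has `ℓ_{u₁}`-norm
`N^{1/u₁}` and Morrey norm at least `N^{1/u₂}`, so an embedding constant `C` forces
`N^{1/u₂ - 1/u₁} ≤ C` for arbitrarily large `N`, i.e. `u₁ ≤ u₂`. -/

open Finset

namespace ENNReal

variable {ι : Type*}

theorem sum_rpow_le_rpow_sum (s : Finset ι) (a : ι → ℝ≥0∞) {r : ℝ} (hr : 1 ≤ r) :
    ∑ i ∈ s, a i ^ r ≤ (∑ i ∈ s, a i) ^ r := by
  classical
  induction s using Finset.induction_on with
  | empty => simp [zero_rpow_of_pos (zero_lt_one.trans_le hr)]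
  | insert i s hi ih =>
    rw [sum_insert hi, sum_insert hi]
    exact (add_le_add le_rfl ih).trans (add_rpow_le_rpow_add _ _ hr)

theorem tsum_rpow_le_rpow_tsum (a : ι → ℝ≥0∞) {r : ℝ} (hr : 1 ≤ r) :
    ∑' i, a i ^ r ≤ (∑' i, a i) ^ r := by
  rw [ENNReal.tsum_eq_iSup_sum]
  exact iSup_le fun s => (sum_rpow_le_rpow_sum s a hr).trans
    (rpow_le_rpow (ENNReal.sum_le_tsum s) (zero_le_one.trans hr))

theorem tsum_rpow_rpow_one_div_le (a : ι → ℝ≥0∞) {p q : ℝ} (hp : 0 < p) (hpq : p ≤ q) :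
    (∑' i, a i ^ q) ^ (1 / q) ≤ (∑' i, a i ^ p) ^ (1 / p) := by
  have hq : 0 < q := hp.trans_le hpq
  have h := tsum_rpow_le_rpow_tsum (fun i => a i ^ p) ((one_le_div hp).2 hpq)
  simp only [← rpow_mul, mul_div_cancel₀ _ hp.ne'] at h
  calc (∑' i, a i ^ q) ^ (1 / q) ≤ ((∑' i, a i ^ p) ^ (q / p)) ^ (1 / q) :=
        rpow_le_rpow h (by positivity)
    _ = (∑' i, a i ^ p) ^ (1 / p) := by rw [← rpow_mul]; congr 1; field_simp

/-- The power-mean inequality `M_p(a) ≤ M_q(a)`, multiplied by `N^{1/q}`. -/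
theorem card_rpow_mul_sum_rpow_rpow_le [Fintype ι] [Nonempty ι] (a : ι → ℝ≥0∞) {p q : ℝ}
    (hp : 0 < p) (hpq : p ≤ q) :
    (Fintype.card ι : ℝ≥0∞) ^ (1 / q - 1 / p) * (∑ i, a i ^ p) ^ (1 / p) ≤
      (∑ i, a i ^ q) ^ (1 / q) := by
  have hq : 0 < q := hp.trans_le hpq
  set N : ℝ≥0∞ := (Fintype.card ι : ℝ≥0∞)
  have hN0 : N ≠ 0 := by simp [N, Fintype.card_ne_zero]
  have hNtop : N ≠ ⊤ := natCast_ne_top _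
  have hmean := rpow_arith_mean_le_arith_mean_rpow univ (fun _ => N⁻¹) (fun i => a i ^ p)
    (by simp [N, ENNReal.mul_inv_cancel hN0 hNtop]) ((one_le_div hp).2 hpq)
  rw [← mul_sum, ← mul_sum] at hmean
  simp only [← rpow_mul, mul_div_cancel₀ _ hp.ne'] at hmean
  have hroot : (N⁻¹ * ∑ i, a i ^ p) ^ (1 / p) ≤ (N⁻¹ * ∑ i, a i ^ q) ^ (1 / q) :=
    calc (N⁻¹ * ∑ i, a i ^ p) ^ (1 / p) = ((N⁻¹ * ∑ i, a i ^ p) ^ (q / p)) ^ (1 / q) := by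
          rw [← rpow_mul]; congr 1; field_simp
      _ ≤ (N⁻¹ * ∑ i, a i ^ q) ^ (1 / q) := rpow_le_rpow hmean (by positivity)
  calc N ^ (1 / q - 1 / p) * (∑ i, a i ^ p) ^ (1 / p)
        = N ^ (1 / q) * (N⁻¹ * ∑ i, a i ^ p) ^ (1 / p) := by
          rw [sub_eq_add_neg, rpow_add _ _ hN0 hNtop, mul_rpow_of_nonneg _ _ (by positivity),
            inv_rpow, ← rpow_neg, mul_assoc]
    _ ≤ N ^ (1 / q) * (N⁻¹ * ∑ i, a i ^ q) ^ (1 / q) := by gcongr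
    _ = (∑ i, a i ^ q) ^ (1 / q) := by
          rw [← mul_rpow_of_nonneg _ _ (by positivity), ← mul_assoc,
            ENNReal.mul_inv_cancel hN0 hNtop, one_mul]

theorem le_of_forall_pow_rpow_le_mul_pow_rpow {b C : ℝ≥0∞} (hb : 1 < b) (hb' : b ≠ ⊤)
    (hC : C ≠ ⊤) {s t : ℝ} (h : ∀ j : ℕ, (b ^ j) ^ s ≤ C * (b ^ j) ^ t) : s ≤ t := by
  by_contra! hts
  have hb0 : b ≠ 0 := (zero_lt_one.trans hb).ne'
  have hpow_rpow : ∀ (j : ℕ) (x : ℝ), (b ^ j) ^ x = (b ^ x) ^ j := fun j x => by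
    rw [← rpow_natCast_mul, mul_comm, rpow_mul_natCast]
  have hbound : ∀ j : ℕ, (b ^ (s - t)) ^ j ≤ C := fun j => by
    have hbt0 : b ^ t ≠ 0 := (rpow_pos (pos_iff_ne_zero.2 hb0) hb').ne'
    have hbt : b ^ t ≠ ⊤ := rpow_ne_top_of_ne_zero hb0 hb'
    rw [← ENNReal.mul_le_mul_iff_left (pow_ne_zero j hbt0) (pow_ne_top hbt), ← mul_pow,
      ← rpow_add _ _ hb0 hb', sub_add_cancel, ← hpow_rpow, ← hpow_rpow]
    exact h j
  obtain ⟨j, hj⟩ := ((ENNReal.tendsto_pow_atTop_nhds_top_iff.2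
    (one_lt_rpow hb (sub_pos.2 hts))).eventually_const_lt hC.lt_top).exists
  exact (hbound j).not_gt hj

end ENNReal

noncomputable def dyadicCube (d j : ℕ) (m : Fin d → ℤ) : Finset (Fin d → ℤ) :=
  Fintype.piFinset fun i => Finset.Ico (2 ^ j * m i) (2 ^ j * (m i + 1))

theorem mem_dyadicCube {d j : ℕ} {m k : Fin d → ℤ} : k ∈ dyadicCube d j m ↔ inDyadic d j m k := by
  simp [dyadicCube, inDyadic]

theorem card_dyadicCube (d j : ℕ) (m : Fin d → ℤ) : #(dyadicCube d j m) = 2 ^ (j * d) := by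
  simp [dyadicCube, Int.card_Ico, mul_add, pow_mul]
  norm_cast

noncomputable instance (d j : ℕ) (m : Fin d → ℤ) : Fintype {k // inDyadic d j m k} :=
  Fintype.subtype (dyadicCube d j m) fun _ => mem_dyadicCube

theorem card_inDyadic (d j : ℕ) (m : Fin d → ℤ) :
    Fintype.card {k // inDyadic d j m k} = 2 ^ (j * d) :=
  (Fintype.card_of_subtype _ fun _ => mem_dyadicCube).trans (card_dyadicCube d j m)

instance (d j : ℕ) (m : Fin d → ℤ) : Nonempty {k // inDyadic d j m k} :=
  Fintype.card_pos_iff.1 (by rw [card_inDyadic]; positivity)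

theorem morreyCubeTerm_le_lpNorm {d : ℕ} {u₁ u₂ p₂ : ℝ} (hu₁ : 0 < u₁) (hp₂ : 0 < p₂)
    (hpu₂ : p₂ ≤ u₂) (hu : u₁ ≤ u₂) (lam : (Fin d → ℤ) → ℂ) (j : ℕ) (m : Fin d → ℤ) :
    ((2 : ℝ≥0∞) ^ (j * d)) ^ (1 / u₂ - 1 / p₂) *
      (∑' k : {k // inDyadic d j m k}, (‖lam k.1‖₊ : ℝ≥0∞) ^ p₂) ^ (1 / p₂) ≤
      lpNorm d u₁ lam := by
  have hcard : ((2 : ℝ≥0∞) ^ (j * d)) = Fintype.card {k // inDyadic d j m k} := by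
    rw [card_inDyadic]; push_cast; rfl
  calc ((2 : ℝ≥0∞) ^ (j * d)) ^ (1 / u₂ - 1 / p₂) *
        (∑' k : {k // inDyadic d j m k}, (‖lam k.1‖₊ : ℝ≥0∞) ^ p₂) ^ (1 / p₂)
      ≤ (∑' k : {k // inDyadic d j m k}, (‖lam k.1‖₊ : ℝ≥0∞) ^ u₂) ^ (1 / u₂) := by
        rw [hcard, tsum_fintype, tsum_fintype]
        exact ENNReal.card_rpow_mul_sum_rpow_rpow_le _ hp₂ hpu₂
    _ ≤ (∑' k : {k // inDyadic d j m k}, (‖lam k.1‖₊ : ℝ≥0∞) ^ u₁) ^ (1 / u₁) :=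
        ENNReal.tsum_rpow_rpow_one_div_le _ hu₁ hu
    _ ≤ lpNorm d u₁ lam :=
        ENNReal.rpow_le_rpow
          (ENNReal.tsum_comp_le_tsum_of_injective Subtype.val_injective _) (by positivity)

theorem morreyNorm_le_lpNorm_s10 {d : ℕ} {u₁ u₂ p₂ : ℝ} (hu₁ : 0 < u₁) (hp₂ : 0 < p₂)
    (hpu₂ : p₂ ≤ u₂) (hu : u₁ ≤ u₂) (lam : (Fin d → ℤ) → ℂ) :
    morreyNorm d u₂ p₂ lam ≤ lpNorm d u₁ lam :=
  iSup₂_le (morreyCubeTerm_le_lpNorm hu₁ hp₂ hpu₂ hu lam)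

noncomputable def cubeIndicator (d j : ℕ) (m : Fin d → ℤ) : (Fin d → ℤ) → ℂ :=
  {k | inDyadic d j m k}.indicator 1

theorem coe_nnnorm_cubeIndicator_rpow {d j : ℕ} {m : Fin d → ℤ} {r : ℝ} (hr : 0 < r)
    (k : Fin d → ℤ) :
    (‖cubeIndicator d j m k‖₊ : ℝ≥0∞) ^ r = {k | inDyadic d j m k}.indicator 1 k := by
  by_cases hk : inDyadic d j m k
  · simp [cubeIndicator, hk]
  · simp [cubeIndicator, hk, ENNReal.zero_rpow_of_pos hr]

theorem tsum_one_inDyadic (d j : ℕ) (m : Fin d → ℤ) :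
    ∑' _ : {k // inDyadic d j m k}, (1 : ℝ≥0∞) = 2 ^ (j * d) := by
  simp [tsum_fintype, card_inDyadic]

theorem lpNorm_cubeIndicator {d j : ℕ} {m : Fin d → ℤ} {r : ℝ} (hr : 0 < r) :
    lpNorm d r (cubeIndicator d j m) = ((2 : ℝ≥0∞) ^ (j * d)) ^ (1 / r) := by
  rw [lpNorm, tsum_congr (coe_nnnorm_cubeIndicator_rpow hr), ← _root_.tsum_subtype]
  exact congrArg (· ^ (1 / r)) (tsum_one_inDyadic d j m)

theorem rpow_le_morreyNorm_cubeIndicator (d j : ℕ) (m : Fin d → ℤ) {u p : ℝ} (hp : 0 < p) :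
    ((2 : ℝ≥0∞) ^ (j * d)) ^ (1 / u) ≤ morreyNorm d u p (cubeIndicator d j m) := by
  have hN0 : (2 : ℝ≥0∞) ^ (j * d) ≠ 0 := by positivity
  have hNtop : (2 : ℝ≥0∞) ^ (j * d) ≠ ⊤ := ENNReal.pow_ne_top ENNReal.ofNat_ne_top
  have hsum : ∑' k : {k // inDyadic d j m k}, (‖cubeIndicator d j m k.1‖₊ : ℝ≥0∞) ^ p =
      2 ^ (j * d) := by
    rw [← tsum_one_inDyadic d j m]
    exact tsum_congr fun k => by simp [coe_nnnorm_cubeIndicator_rpow hp]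
  rw [morreyNorm]
  refine le_iSup₂_of_le j m (le_of_eq ?_)
  rw [hsum, ← ENNReal.rpow_add _ _ hN0 hNtop, sub_add_cancel]

theorem lp_embeds_morrey_iff (d : ℕ) (hd : 0 < d) (u₁ u₂ p₂ : ℝ)
    (hu₁ : 0 < u₁) (hp₂ : 0 < p₂) (hpu₂ : p₂ ≤ u₂) :
    (∃ C : ℝ≥0, 0 < C ∧ ∀ lam : (Fin d → ℤ) → ℂ, lpNorm d u₁ lam ≠ ⊤ →
        morreyNorm d u₂ p₂ lam ≤ (C : ℝ≥0∞) * lpNorm d u₁ lam) ↔ u₁ ≤ u₂ := by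
  refine ⟨fun ⟨C, _, hemb⟩ => ?_, fun hu => ⟨1, one_pos, fun lam _ => ?_⟩⟩
  · have htwo : 1 < (2 : ℝ≥0∞) ^ d := one_lt_pow₀ (by norm_num) hd.ne'
    have hcube : ∀ j : ℕ, (((2 : ℝ≥0∞) ^ d) ^ j) ^ (1 / u₂) ≤
        C * (((2 : ℝ≥0∞) ^ d) ^ j) ^ (1 / u₁) := fun j => by
      rw [← pow_mul, mul_comm, ← lpNorm_cubeIndicator hu₁ (m := 0)]
      refine (rpow_le_morreyNorm_cubeIndicator d j 0 hp₂).trans (hemb _ ?_)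
      rw [lpNorm_cubeIndicator hu₁]
      exact ENNReal.rpow_ne_top_of_nonneg (by positivity) (ENNReal.pow_ne_top ENNReal.ofNat_ne_top)
    have hexp : 1 / u₂ ≤ 1 / u₁ := ENNReal.le_of_forall_pow_rpow_le_mul_pow_rpow htwo
      (ENNReal.pow_ne_top ENNReal.ofNat_ne_top) ENNReal.coe_ne_top hcube
    exact (one_div_le_one_div (hp₂.trans_le hpu₂) hu₁).1 hexp
  · simpa using morreyNorm_le_lpNorm_s10 hu₁ hp₂ hpu₂ hu lam
end
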